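/- arXiv:2603.11302 — 7 statements merged into one kernel-verified Lean document; each statement's English description precedes it below -/
import Mathlib

section
/- Let S ⊆ ℝⁿ be a nonempty closed set and x̄ ∈ S. Then the Clarke tangent cone admits the characterization T^C_S(x̄) = {v ∈ ℝⁿ : lim_{t↓0, x→x̄, x∈S} d_S(x+tv)/t = 0}, i.e. v belongs to T^C_S(x̄) if and only if for every sequence (x_i) ⊆ S converging to x̄ and every sequence t_i ↓ 0 one has d_S(x_i + t_i v)/t_i → 0. -/
/-!
Since `d_S` is `1`-Lipschitz, the Clarke difference quotient is bounded by `‖v‖`, and at base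
points of `S` it equals `d_S(x + t v) / t ≥ 0`; hence the limsup vanishes iff the quotient is
eventually below every `ε > 0`, and restricting to base points in `S` gives the forward direction.
Conversely, replacing a base point `y` by some `x ∈ S` with `|y - x| < d_S(y) + t²` raises the
quotient by at most `t`, and `x → x̄` as `y → x̄`; so a sequence along which the quotient stays
`≥ ε` yields sequences in `S` along which `d_S(x_i + t_i v) / t_i` does not tend to `0`.
-/

open Metric Set Filter

noncomputable section

abbrev Euc (n : ℕ) := EuclideanSpace ℝ (Fin n)

def clarkeTangentCone {n : ℕ} (S : Set (Euc n)) (xbar : Euc n) : Set (Euc n) :=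
  {v | Filter.limsup
      (fun q : ℝ × Euc n =>
        (Metric.infDist (q.2 + q.1 • v) S - Metric.infDist q.2 S) / q.1)
      ((nhdsWithin (0 : ℝ) (Set.Ioi 0)) ×ˢ (nhds xbar)) = 0}

open scoped Topology

theorem Metric.tendsto_of_dist_lt_infDist_add {X ι : Type*} [PseudoMetricSpace X] {S : Set X}
    {l : Filter ι} {x y : ι → X} {r : ι → ℝ} {a : X} (ha : a ∈ S) (hy : Tendsto y l (𝓝 a))
    (hr : Tendsto r l (𝓝 0)) (hxy : ∀ i, dist (y i) (x i) < infDist (y i) S + r i) :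
    Tendsto x l (𝓝 a) := by
  have hdist : Tendsto (fun i => 2 * dist (y i) a + r i) l (𝓝 0) := by
    simpa using ((tendsto_iff_dist_tendsto_zero.1 hy).const_mul 2).add hr
  refine tendsto_iff_dist_tendsto_zero.2 (squeeze_zero (fun _ => dist_nonneg) (fun i => ?_) hdist)
  calc dist (x i) a ≤ dist (y i) (x i) + dist (y i) a := dist_triangle_left _ _ _
    _ ≤ infDist (y i) S + r i + dist (y i) a := by linarith [hxy i]
    _ ≤ 2 * dist (y i) a + r i := by linarith [infDist_le_dist_of_mem (x := y i) ha]

section ClarkeQuotient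

variable {E : Type*} [SeminormedAddCommGroup E] [NormedSpace ℝ E] (S : Set E) (v : E)

def clarkeQuotient (q : ℝ × E) : ℝ :=
  (infDist (q.2 + q.1 • v) S - infDist q.2 S) / q.1

variable {S v}

theorem abs_clarkeQuotient_le {q : ℝ × E} (hq : 0 < q.1) : |clarkeQuotient S v q| ≤ ‖v‖ := by
  have hlip : |infDist (q.2 + q.1 • v) S - infDist q.2 S| ≤ q.1 * ‖v‖ := by
    simpa [← Real.dist_eq, norm_smul, abs_of_pos hq] using
      (lipschitz_infDist_pt S).dist_le_mul (q.2 + q.1 • v) q.2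
  rw [clarkeQuotient, abs_div, abs_of_pos hq, div_le_iff₀ hq, mul_comm]
  exact hlip

theorem clarkeQuotient_of_mem {q : ℝ × E} (hq : q.2 ∈ S) :
    clarkeQuotient S v q = infDist (q.2 + q.1 • v) S / q.1 := by
  rw [clarkeQuotient, infDist_zero_of_mem hq, sub_zero]

theorem clarkeQuotient_le_of_dist_lt {t : ℝ} {x y : E} (ht : 0 < t)
    (hxy : dist y x < infDist y S + t ^ 2) :
    clarkeQuotient S v (t, y) ≤ infDist (x + t • v) S / t + t := by
  have hshift : infDist (y + t • v) S ≤ infDist (x + t • v) S + dist y x := by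
    simpa using infDist_le_infDist_add_dist (x := y + t • v) (y := x + t • v) (s := S)
  rw [clarkeQuotient, div_add' _ _ _ ht.ne', div_le_div_iff_of_pos_right ht]
  nlinarith

theorem limsup_clarkeQuotient_eq_zero_iff {xbar : E} (hxbar : xbar ∈ S) :
    limsup (clarkeQuotient S v) (𝓝[>] 0 ×ˢ 𝓝 xbar) = 0 ↔
      ∀ ε > 0, ∀ᶠ q in 𝓝[>] 0 ×ˢ 𝓝 xbar, clarkeQuotient S v q < ε := by
  have hpos : ∀ᶠ q : ℝ × E in 𝓝[>] 0 ×ˢ 𝓝 xbar, 0 < q.1 :=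
    eventually_mem_nhdsWithin.prod_inl _
  have hbdd : ∀ᶠ q in 𝓝[>] 0 ×ˢ 𝓝 xbar, |clarkeQuotient S v q| ≤ ‖v‖ :=
    hpos.mono fun _ => abs_clarkeQuotient_le
  have hnonneg : ∃ᶠ q in 𝓝[>] 0 ×ˢ 𝓝 xbar, 0 ≤ clarkeQuotient S v q := by
    have hxbar_line : Tendsto (fun t : ℝ => (t, xbar)) (𝓝[>] 0) (𝓝[>] 0 ×ˢ 𝓝 xbar) :=
      tendsto_id.prodMk tendsto_const_nhds
    refine hxbar_line.frequently (eventually_mem_nhdsWithin.mono fun t ht => ?_).frequently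
    rw [clarkeQuotient_of_mem hxbar]
    exact div_nonneg infDist_nonneg (le_of_lt ht)
  have hbddAbove : IsBoundedUnder (· ≤ ·) (𝓝[>] 0 ×ˢ 𝓝 xbar) (clarkeQuotient S v) :=
    ⟨‖v‖, eventually_map.2 (hbdd.mono fun _ hq => (abs_le.1 hq).2)⟩
  have hbddBelow : IsBoundedUnder (· ≥ ·) (𝓝[>] 0 ×ˢ 𝓝 xbar) (clarkeQuotient S v) :=
    ⟨-‖v‖, eventually_map.2 (hbdd.mono fun _ hq => (abs_le.1 hq).1)⟩
  rw [← limsup_le_iff hbddBelow.isCoboundedUnder_le hbddAbove]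
  exact ⟨le_of_eq, fun h => le_antisymm h (le_limsup_of_frequently_le hnonneg hbddAbove)⟩

theorem tendsto_infDist_add_smul_div {xbar : E}
    (h : ∀ ε > 0, ∀ᶠ q in 𝓝[>] 0 ×ˢ 𝓝 xbar, clarkeQuotient S v q < ε)
    {x : ℕ → E} {t : ℕ → ℝ} (hxS : ∀ i, x i ∈ S) (hx : Tendsto x atTop (𝓝 xbar))
    (htpos : ∀ i, 0 < t i) (ht : Tendsto t atTop (𝓝 0)) :
    Tendsto (fun i => infDist (x i + t i • v) S / t i) atTop (𝓝 0) := by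
  have hq : Tendsto (fun i => (t i, x i)) atTop (𝓝[>] 0 ×ˢ 𝓝 xbar) :=
    (tendsto_nhdsWithin_iff.2 ⟨ht, .of_forall htpos⟩).prodMk hx
  refine tendsto_order.2 ⟨fun a ha => .of_forall fun i => ?_, fun ε hε => ?_⟩
  · exact ha.trans_le (div_nonneg infDist_nonneg (htpos i).le)
  · filter_upwards [hq.eventually (h ε hε)] with i hi
    rwa [clarkeQuotient_of_mem (hxS i)] at hi

theorem eventually_clarkeQuotient_lt {xbar : E} (hxbar : xbar ∈ S)
    (h : ∀ (x : ℕ → E) (t : ℕ → ℝ), (∀ i, x i ∈ S) → Tendsto x atTop (𝓝 xbar) →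
      (∀ i, 0 < t i) → Tendsto t atTop (𝓝 0) →
      Tendsto (fun i => infDist (x i + t i • v) S / t i) atTop (𝓝 0)) :
    ∀ ε > 0, ∀ᶠ q in 𝓝[>] 0 ×ˢ 𝓝 xbar, clarkeQuotient S v q < ε := by
  intro ε hε
  by_contra hnot
  have hfreq : ∃ᶠ q in 𝓝[>] 0 ×ˢ 𝓝 xbar, ε ≤ clarkeQuotient S v q ∧ 0 < q.1 :=
    (not_eventually.1 hnot).mono (fun _ => le_of_not_gt) |>.and_eventually
      (eventually_mem_nhdsWithin.prod_inl _)
  obtain ⟨u, hu, hεu⟩ := exists_seq_forall_of_frequently hfreq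
  set t := fun i => (u i).1
  set y := fun i => (u i).2
  have ht : Tendsto t atTop (𝓝 0) := (tendsto_fst.comp hu).mono_right nhdsWithin_le_nhds
  have hnear : ∀ i, ∃ x ∈ S, dist (y i) x < infDist (y i) S + t i ^ 2 := fun i =>
    (infDist_lt_iff ⟨xbar, hxbar⟩).1 (lt_add_of_pos_right _ (pow_pos (hεu i).2 2))
  choose x hxS hxy using hnear
  have hx : Tendsto x atTop (𝓝 xbar) :=
    tendsto_of_dist_lt_infDist_add hxbar (tendsto_snd.comp hu) (by simpa using ht.pow 2) hxy
  have hlim := (h x t hxS hx (fun i => (hεu i).2) ht).add ht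
  rw [zero_add] at hlim
  refine hε.not_ge (ge_of_tendsto' hlim fun i => ?_)
  exact (hεu i).1.trans (clarkeQuotient_le_of_dist_lt (hεu i).2 (hxy i))

end ClarkeQuotient

theorem stmt0_general {n : ℕ} (S : Set (Euc n)) (xbar : Euc n) (hxbar : xbar ∈ S) (v : Euc n) :
    v ∈ clarkeTangentCone S xbar ↔
      ∀ (x : ℕ → Euc n) (t : ℕ → ℝ),
        (∀ i, x i ∈ S) → Filter.Tendsto x Filter.atTop (nhds xbar) →
        (∀ i, 0 < t i) → Filter.Tendsto t Filter.atTop (nhds 0) →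
        Filter.Tendsto (fun i => Metric.infDist (x i + t i • v) S / t i)
          Filter.atTop (nhds 0) := by
  change limsup (clarkeQuotient S v) (𝓝[>] 0 ×ˢ 𝓝 xbar) = 0 ↔ _
  rw [limsup_clarkeQuotient_eq_zero_iff hxbar]
  exact ⟨fun h _ _ => tendsto_infDist_add_smul_div h, eventually_clarkeQuotient_lt hxbar⟩

/-- Lemma 2.1: for a nonempty closed `S ⊆ ℝⁿ` and `xbar ∈ S`,
`v ∈ T^C_S(xbar)` iff for every sequence `x_i ∈ S` converging to `xbar` and every
sequence `t_i ↓ 0`, one has `d_S(x_i + t_i v)/t_i → 0`. -/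
theorem stmt0 {n : ℕ} (S : Set (Euc n)) (hne : S.Nonempty) (hcl : IsClosed S)
    (xbar : Euc n) (hxbar : xbar ∈ S) (v : Euc n) :
    v ∈ clarkeTangentCone S xbar ↔
      ∀ (x : ℕ → Euc n) (t : ℕ → ℝ),
        (∀ i, x i ∈ S) → Filter.Tendsto x Filter.atTop (nhds xbar) →
        (∀ i, 0 < t i) → Filter.Tendsto t Filter.atTop (nhds 0) →
        Filter.Tendsto (fun i => Metric.infDist (x i + t i • v) S / t i)
          Filter.atTop (nhds 0) :=
  stmt0_general S xbar hxbar v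
end
end

section
/- Two convex cones K₁, K₂ ⊆ ℝⁿ are transversal if and only if either they are strongly transversal or they are complementary linear subspaces, namely K₁ + K₂ = ℝⁿ and K₁ ∩ K₂ = {0} with K₁, K₂ linear subspaces. -/
/-
If `K₁ − K₂ = ℝⁿ` then both cones contain `0`. Suppose `K₁ ∩ K₂ = {0}` and `x ∈ K₁`. Writing
`-x = a - b` with `a ∈ K₁`, `b ∈ K₂` gives `b = a + x ∈ K₁ ∩ K₂`, so `b = 0` and `-x = a ∈ K₁`;
symmetrically `K₂ = -K₂`. A convex cone closed under negation is a linear subspace, and for such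
a `K₂` the sets `K₁ − K₂` and `K₁ + K₂` coincide.
-/

open Set

noncomputable section

/-- `K` is a cone: `α • k ∈ K` for every `α ≥ 0` and `k ∈ K`. -/
def IsCone {n : ℕ} (K : Set (Euc n)) : Prop :=
  ∀ a : ℝ, 0 ≤ a → ∀ k ∈ K, a • k ∈ K

/-- `K₁` and `K₂` are transversal: `K₁ − K₂ = ℝⁿ`. -/
def Transversal {n : ℕ} (K₁ K₂ : Set (Euc n)) : Prop :=
  {x | ∃ k₁ ∈ K₁, ∃ k₂ ∈ K₂, x = k₁ - k₂} = Set.univ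

/-- `K₁` and `K₂` are strongly transversal: transversal and `K₁ ∩ K₂ ⊋ {0}`. -/
def StronglyTransversal {n : ℕ} (K₁ K₂ : Set (Euc n)) : Prop :=
  Transversal K₁ K₂ ∧ {(0 : Euc n)} ⊂ K₁ ∩ K₂

namespace IsCone

variable {n : ℕ} {K : Set (Euc n)}

theorem zero_mem (hc : IsCone K) {k : Euc n} (hk : k ∈ K) : (0 : Euc n) ∈ K := by
  simpa using hc 0 le_rfl k hk

theorem add_mem (hc : IsCone K) (hK : Convex ℝ K) {x y : Euc n} (hx : x ∈ K) (hy : y ∈ K) :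
    x + y ∈ K := by
  have hmid := hK hx hy (by norm_num : (0 : ℝ) ≤ 1 / 2) (by norm_num : (0 : ℝ) ≤ 1 / 2)
    (by norm_num)
  have hdouble : (2 : ℝ) • ((1 / 2 : ℝ) • x + (1 / 2 : ℝ) • y) = x + y := by
    rw [smul_add, smul_smul, smul_smul]; norm_num
  simpa only [hdouble] using hc 2 (by norm_num) _ hmid

def toSubmodule (hc : IsCone K) (hK : Convex ℝ K) (h0 : (0 : Euc n) ∈ K)
    (hneg : ∀ x ∈ K, -x ∈ K) : Submodule ℝ (Euc n) where
  carrier := K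
  add_mem' := hc.add_mem hK
  zero_mem' := h0
  smul_mem' c x hx := by
    rcases le_total 0 c with hc0 | hc0
    · exact hc c hc0 x hx
    · simpa using hc (-c) (neg_nonneg.2 hc0) _ (hneg x hx)

end IsCone

theorem sub_set_eq_add_set_of_neg_mem {n : ℕ} (K₁ K₂ : Set (Euc n))
    (hneg : ∀ x ∈ K₂, -x ∈ K₂) :
    {x | ∃ k₁ ∈ K₁, ∃ k₂ ∈ K₂, x = k₁ - k₂} = {x | ∃ k₁ ∈ K₁, ∃ k₂ ∈ K₂, x = k₁ + k₂} := by
  ext x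
  constructor
  · rintro ⟨a, ha, b, hb, rfl⟩
    exact ⟨a, ha, -b, hneg b hb, sub_eq_add_neg a b⟩
  · rintro ⟨a, ha, b, hb, rfl⟩
    exact ⟨a, ha, -b, hneg b hb, (sub_neg_eq_add a b).symm⟩

namespace Transversal

variable {n : ℕ} {K₁ K₂ : Set (Euc n)}

theorem exists_sub_eq (ht : Transversal K₁ K₂) (x : Euc n) :
    ∃ k₁ ∈ K₁, ∃ k₂ ∈ K₂, x = k₁ - k₂ :=
  eq_univ_iff_forall.1 ht x

theorem symm (ht : Transversal K₁ K₂) : Transversal K₂ K₁ := by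
  refine eq_univ_iff_forall.2 fun x => ?_
  obtain ⟨a, ha, b, hb, hab⟩ := ht.exists_sub_eq (-x)
  exact ⟨b, hb, a, ha, by rw [← neg_sub, ← hab, neg_neg]⟩

theorem zero_mem_inter (ht : Transversal K₁ K₂) (hc₁ : IsCone K₁) (hc₂ : IsCone K₂) :
    (0 : Euc n) ∈ K₁ ∩ K₂ := by
  obtain ⟨a, ha, b, hb, -⟩ := ht.exists_sub_eq 0
  exact ⟨hc₁.zero_mem ha, hc₂.zero_mem hb⟩

theorem neg_mem_left (ht : Transversal K₁ K₂) (h₁ : Convex ℝ K₁) (hc₁ : IsCone K₁)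
    (hcap : K₁ ∩ K₂ = {0}) {x : Euc n} (hx : x ∈ K₁) : -x ∈ K₁ := by
  obtain ⟨a, ha, b, hb, hab⟩ := ht.exists_sub_eq (-x)
  have hb_eq : b = a + x := by rw [← neg_neg x, hab]; abel
  have hb0 : b = 0 := by
    have hb_mem : b ∈ K₁ ∩ K₂ := ⟨hb_eq ▸ hc₁.add_mem h₁ ha hx, hb⟩
    rwa [hcap] at hb_mem
  rwa [hab, hb0, sub_zero]

theorem neg_mem_right (ht : Transversal K₁ K₂) (h₂ : Convex ℝ K₂) (hc₂ : IsCone K₂)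
    (hcap : K₁ ∩ K₂ = {0}) {x : Euc n} (hx : x ∈ K₂) : -x ∈ K₂ :=
  ht.symm.neg_mem_left h₂ hc₂ (by rw [inter_comm, hcap]) hx

end Transversal

/-- Proposition 2.1: two convex cones are transversal iff they are
strongly transversal or they are complementary linear subspaces. -/
theorem stmt1 {n : ℕ} (K₁ K₂ : Set (Euc n))
    (h₁ : Convex ℝ K₁) (h₂ : Convex ℝ K₂) (hc₁ : IsCone K₁) (hc₂ : IsCone K₂) :
    Transversal K₁ K₂ ↔
      StronglyTransversal K₁ K₂ ∨
      ((∃ W₁ : Submodule ℝ (Euc n), K₁ = ↑W₁) ∧ (∃ W₂ : Submodule ℝ (Euc n), K₂ = ↑W₂) ∧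
        {x | ∃ k₁ ∈ K₁, ∃ k₂ ∈ K₂, x = k₁ + k₂} = Set.univ ∧ K₁ ∩ K₂ = {0}) := by
  constructor
  · intro ht
    have h0 := ht.zero_mem_inter hc₁ hc₂
    by_cases hcap : K₁ ∩ K₂ = {0}
    · have hneg₂ : ∀ x ∈ K₂, -x ∈ K₂ := fun _ => ht.neg_mem_right h₂ hc₂ hcap
      refine Or.inr ⟨⟨hc₁.toSubmodule h₁ h0.1 fun _ => ht.neg_mem_left h₁ hc₁ hcap, rfl⟩,
        ⟨hc₂.toSubmodule h₂ h0.2 hneg₂, rfl⟩, ?_, hcap⟩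
      rwa [← sub_set_eq_add_set_of_neg_mem K₁ K₂ hneg₂]
    · exact Or.inl ⟨ht, (singleton_subset_iff.2 h0).ssubset_of_ne (Ne.symm hcap)⟩
  · rintro (hst | ⟨-, ⟨W₂, rfl⟩, hsum, -⟩)
    · exact hst.1
    · rwa [Transversal, sub_set_eq_add_set_of_neg_mem K₁ _ fun _ => neg_mem]
end
end

section
/- Let S ⊆ ℝⁿ be a nonempty closed set and r > 0. Then S is r-prox-regular if and only if for all x, x' ∈ S and every η ∈ N^P_S(x) one has η·(x' − x) ≤ (1/(2r))|η||x' − x|². -/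
open Metric Set
open scoped RealInnerProductSpace

noncomputable section

/-- The metric projection `Π_S(x) = {y ∈ S : |x − y| = d_S(x)}`. -/
def projSet {n : ℕ} (S : Set (Euc n)) (x : Euc n) : Set (Euc n) :=
  {y ∈ S | dist x y = Metric.infDist x S}

/-- The proximal normal cone `N^P_S(xbar) = {η : ∃ σ > 0, xbar ∈ Π_S(xbar + σ η)}`. -/
def proxNormalCone {n : ℕ} (S : Set (Euc n)) (xbar : Euc n) : Set (Euc n) :=
  {η | ∃ σ > (0 : ℝ), xbar ∈ projSet S (xbar + σ • η)}

/-- `S` is `r`-prox-regular: for every `xbar ∈ S`, every unit `η ∈ N^P_S(xbar)` and every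
`s ∈ (0, r]`, one has `xbar ∈ Π_S(xbar + s η)`. -/
def IsProxRegular {n : ℕ} (r : ℝ) (S : Set (Euc n)) : Prop :=
  ∀ xbar ∈ S, ∀ η ∈ proxNormalCone S xbar, ‖η‖ = 1 →
    ∀ s : ℝ, 0 < s → s ≤ r → xbar ∈ projSet S (xbar + s • η)

/-!
Expanding `‖x + η − x'‖² = ‖η‖² − 2⟪η, x' − x⟫ + ‖x' − x‖²` shows that `x ∈ Π_S(x + η)` means
exactly `2⟪η, x' − x⟫ ≤ ‖x' − x‖²` for all `x' ∈ S`. Taking `η = s u` with `u` a unit proximal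
normal, prox-regularity says this holds for all `s ≤ r`, which (the left side being linear in `s`)
is the case `s = r`, i.e. `⟪u, x' − x⟫ ≤ ‖x' − x‖² / (2r)`; the general inequality follows by
scaling, as the proximal normal cone is a cone.
-/

section ProxRegular

variable {n : ℕ} {S : Set (Euc n)} {x y η : Euc n}

lemma mem_projSet_iff : y ∈ projSet S x ↔ y ∈ S ∧ ∀ z ∈ S, dist x y ≤ dist x z := by
  refine ⟨fun ⟨hy, hd⟩ => ⟨hy, fun z hz => hd ▸ infDist_le_dist_of_mem hz⟩, fun ⟨hy, hd⟩ => ?_⟩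
  refine ⟨hy, le_antisymm ?_ (infDist_le_dist_of_mem hy)⟩
  exact le_infDist ⟨y, hy⟩ |>.2 hd

lemma mem_projSet_add_iff (hx : x ∈ S) :
    x ∈ projSet S (x + η) ↔ ∀ x' ∈ S, 2 * ⟪η, x' - x⟫ ≤ ‖x' - x‖ ^ 2 := by
  simp only [mem_projSet_iff, hx, true_and, dist_eq_norm, add_sub_cancel_left]
  refine forall₂_congr fun x' _ => ?_
  have hsub : x + η - x' = η - (x' - x) := by abel
  rw [hsub, ← sq_le_sq₀ (norm_nonneg _) (norm_nonneg _), norm_sub_sq_real]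
  constructor <;> intro h <;> linarith

lemma smul_mem_proxNormalCone {c : ℝ} (hc : 0 < c) (hη : η ∈ proxNormalCone S x) :
    c • η ∈ proxNormalCone S x := by
  obtain ⟨σ, hσ, hmem⟩ := hη
  refine ⟨σ / c, div_pos hσ hc, ?_⟩
  rwa [smul_smul, div_mul_cancel₀ σ hc.ne']

variable {r : ℝ}

lemma isProxRegular_iff_inner_unit_le (hr : 0 < r) :
    IsProxRegular r S ↔ ∀ x ∈ S, ∀ x' ∈ S, ∀ η ∈ proxNormalCone S x, ‖η‖ = 1 →
      2 * r * ⟪η, x' - x⟫ ≤ ‖x' - x‖ ^ 2 := by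
  refine forall₂_congr fun x hx => ?_
  simp only [mem_projSet_add_iff hx, real_inner_smul_left]
  constructor
  · intro h x' hx' η hη hη1
    simpa only [mul_assoc] using h η hη hη1 r hr le_rfl x' hx'
  · intro h η hη hη1 s hs hsr x' hx'
    have hr' := h x' hx' η hη hη1
    rcases le_total ⟪η, x' - x⟫ 0 with hneg | hpos
    · nlinarith [sq_nonneg ‖x' - x‖]
    · nlinarith

end ProxRegular

theorem stmt5_general {n : ℕ} (S : Set (Euc n))
    (r : ℝ) (hr : 0 < r) :
    IsProxRegular r S ↔
      ∀ x ∈ S, ∀ x' ∈ S, ∀ η ∈ proxNormalCone S x,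
        ⟪η, x' - x⟫ ≤ (1 / (2 * r)) * ‖η‖ * ‖x' - x‖ ^ 2 := by
  rw [isProxRegular_iff_inner_unit_le hr]
  refine forall₂_congr fun x _ => forall₂_congr fun x' _ => ⟨fun h η hη => ?_, fun h η hη hη1 => ?_⟩
  · rcases eq_or_ne η 0 with rfl | hη0
    · simp
    have hc : 0 < ‖η‖ := norm_pos_iff.2 hη0
    have hu := h _ (smul_mem_proxNormalCone (inv_pos.2 hc) hη) (norm_smul_inv_norm hη0)
    rw [real_inner_smul_left] at hu
    field_simp at hu ⊢
    linarith
  · have h1 := h η hη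
    rw [hη1] at h1
    field_simp at h1
    linarith

/-- Proposition 2.3 (i)⇔(ii): `S` is `r`-prox-regular iff
`⟪η, x' − x⟫ ≤ (1/(2r)) |η| |x' − x|²` for all `x, x' ∈ S` and `η ∈ N^P_S(x)`. -/
theorem stmt5 {n : ℕ} (S : Set (Euc n)) (hne : S.Nonempty) (hcl : IsClosed S)
    (r : ℝ) (hr : 0 < r) :
    IsProxRegular r S ↔
      ∀ x ∈ S, ∀ x' ∈ S, ∀ η ∈ proxNormalCone S x,
        ⟪η, x' - x⟫ ≤ (1 / (2 * r)) * ‖η‖ * ‖x' - x‖ ^ 2 :=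
  stmt5_general S r hr
end
end

section
/- Let S ⊆ ℝⁿ be a nonempty closed set and r > 0. Then S is r-prox-regular if and only if for every x ∈ U_r \ S (where U_r := {x ∈ ℝⁿ : d_S(x) < r}) the projection Π_S(x) is a singleton and, identifying it with its unique element, Π_S(x) = Π_S(Π_S(x) + s·(x − Π_S(x))/|x − Π_S(x)|) for every s ∈ [0, r). -/
/-!
Fix `y ∈ S` and a unit vector `η`. The set of `t ≥ 0` with `y ∈ Π_S(y + tη)` is an interval
containing `0`, closed since `d_S` is continuous. If it contains `r`, then for `s < r` the
closed ball of radius `s` about `y + sη` lies in the closed ball of radius `r` about `y + rη`,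
which `S` meets only on its boundary, and the two boundaries meet only at `y`; hence
`Π_S(y + sη) = {y}`. Conversely, a proximal normal `η` at `y` yields a point `y + ση ∉ S` with
`σ < r` projecting onto `y`, the hypothesis then gives `y ∈ Π_S(y + tη)` for all `t < r`, and
closedness of the interval gives `t = r`.
-/

open Metric Set

noncomputable section

section Ray

variable {E : Type*} [NormedAddCommGroup E] [NormedSpace ℝ E] {S : Set E} {y η : E} {s t : ℝ}

lemma dist_add_smul_of_norm_eq_one (y : E) (hη : ‖η‖ = 1) (ht : 0 ≤ t) :
    dist (y + t • η) y = t := by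
  rw [dist_self_add_left, norm_smul_of_nonneg ht, hη, mul_one]

lemma dist_add_smul_add_smul_of_norm_eq_one (y : E) (hη : ‖η‖ = 1) (hts : t ≤ s) :
    dist (y + s • η) (y + t • η) = s - t := by
  rw [dist_add_left, dist_eq_norm, ← sub_smul, norm_smul_of_nonneg (sub_nonneg.2 hts), hη,
    mul_one]

lemma infDist_add_smul_le (hy : y ∈ S) (hη : ‖η‖ = 1) (ht : 0 ≤ t) :
    infDist (y + t • η) S ≤ t :=
  (infDist_le_dist_of_mem hy).trans_eq (dist_add_smul_of_norm_eq_one y hη ht)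

lemma infDist_add_smul_eq_of_le (hy : y ∈ S) (hη : ‖η‖ = 1) (ht : 0 ≤ t) (hts : t ≤ s)
    (hs : infDist (y + s • η) S = s) : infDist (y + t • η) S = t := by
  refine le_antisymm (infDist_add_smul_le hy hη ht) ?_
  have := infDist_le_infDist_add_dist (x := y + s • η) (y := y + t • η) (s := S)
  rw [hs, dist_add_smul_add_smul_of_norm_eq_one y hη hts] at this
  linarith

lemma infDist_add_smul_eq_of_forall_mem_Ioo (hs : 0 < s)
    (h : ∀ t ∈ Ioo 0 s, infDist (y + t • η) S = t) : infDist (y + s • η) S = s := by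
  have hclosed : IsClosed {t : ℝ | infDist (y + t • η) S = t} :=
    isClosed_eq ((continuous_infDist_pt S).comp (by fun_prop)) continuous_id
  exact hclosed.closure_subset_iff.2 h (by rw [closure_Ioo hs.ne]; exact right_mem_Icc.2 hs.le)

lemma eq_norm_smul_of_norm_add_smul_ge [StrictConvexSpace ℝ E] {u : E} {c : ℝ}
    (hη : ‖η‖ = 1) (hc : 0 < c) (h : ‖u‖ + c ≤ ‖u + c • η‖) : u = ‖u‖ • η := by
  have hcη : ‖c • η‖ = c := by rw [norm_smul_of_nonneg hc.le, hη, mul_one]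
  have hray : SameRay ℝ u (c • η) :=
    sameRay_iff_norm_add.2 (le_antisymm (norm_add_le _ _) (by rwa [hcη]))
  have := hray.norm_smul_eq
  rw [hcη, smul_comm] at this
  exact (smul_right_injective E hc.ne' this).symm

end Ray

section Projection

variable {n : ℕ} {S : Set (Euc n)} {y η : Euc n} {r s t : ℝ}

lemma mem_projSet_add_smul_iff (hy : y ∈ S) (hη : ‖η‖ = 1) (ht : 0 ≤ t) :
    y ∈ projSet S (y + t • η) ↔ infDist (y + t • η) S = t := by
  rw [projSet, mem_ofPred_eq, dist_add_smul_of_norm_eq_one y hη ht, eq_comm]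
  exact and_iff_right hy

lemma projSet_add_smul_eq_singleton (hy : y ∈ S) (hη : ‖η‖ = 1) (hs : 0 ≤ s) (hsr : s < r)
    (hyr : y ∈ projSet S (y + r • η)) : projSet S (y + s • η) = {y} := by
  have hdr := (mem_projSet_add_smul_iff hy hη (hs.trans hsr.le)).1 hyr
  have hds := infDist_add_smul_eq_of_le hy hη hs hsr.le hdr
  refine Subset.antisymm (fun z ⟨hz, hzs⟩ => ?_) (singleton_subset_iff.2 ⟨hy, ?_⟩)
  · set u := y + s • η - z
    have hu : ‖u‖ = s := by rw [← dist_eq_norm, hzs, hds]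
    have hfar : ‖u‖ + (r - s) ≤ ‖u + (r - s) • η‖ := by
      have hvec : u + (r - s) • η = y + r • η - z := by simp only [u]; module
      have hrz := infDist_le_dist_of_mem hz (x := y + r • η)
      rw [hdr] at hrz
      rw [hu, hvec, ← dist_eq_norm]
      linarith
    have hus := eq_norm_smul_of_norm_add_smul_ge hη (sub_pos.2 hsr) hfar
    rw [hu] at hus
    exact mem_singleton_iff.2 (by linear_combination (norm := module) -hus)
  · rw [dist_add_smul_of_norm_eq_one y hη hs, hds]

lemma mem_projSet_add_smul_of_le (hy : y ∈ S) (hη : ‖η‖ = 1) (ht : 0 ≤ t) (hts : t ≤ s)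
    (hs : y ∈ projSet S (y + s • η)) : y ∈ projSet S (y + t • η) :=
  (mem_projSet_add_smul_iff hy hη ht).2 <| infDist_add_smul_eq_of_le hy hη ht hts <|
    (mem_projSet_add_smul_iff hy hη (ht.trans hts)).1 hs

lemma mem_projSet_add_smul_of_forall_mem_Ioo (hy : y ∈ S) (hη : ‖η‖ = 1) (hs : 0 < s)
    (h : ∀ t ∈ Ioo 0 s, y ∈ projSet S (y + t • η)) : y ∈ projSet S (y + s • η) :=
  (mem_projSet_add_smul_iff hy hη hs.le).2 <| infDist_add_smul_eq_of_forall_mem_Ioo hs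
    fun t ht => (mem_projSet_add_smul_iff hy hη ht.1.le).1 (h t ht)

end Projection

theorem IsProxRegular.exists_projSet_eq_singleton {n : ℕ} {S : Set (Euc n)} {r : ℝ}
    (hpr : IsProxRegular r S) (hne : S.Nonempty) (hcl : IsClosed S) (hr : 0 < r) {x : Euc n}
    (hxr : infDist x S < r) (hxS : x ∉ S) :
    ∃ y : Euc n, projSet S x = {y} ∧
      ∀ s : ℝ, 0 ≤ s → s < r → projSet S (y + (s / ‖x - y‖) • (x - y)) = {y} := by
  obtain ⟨y, hy, hxy⟩ := hcl.exists_infDist_eq_dist hne x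
  have hxy0 : x - y ≠ 0 := sub_ne_zero.2 fun h => hxS (h ▸ hy)
  set η := ‖x - y‖⁻¹ • (x - y)
  have hη : ‖η‖ = 1 := norm_smul_inv_norm hxy0
  have hray (s : ℝ) : y + (s / ‖x - y‖) • (x - y) = y + s • η := by
    rw [smul_smul, div_eq_mul_inv]
  have hx : y + ‖x - y‖ • η = x := by
    rw [← hray, div_self (norm_ne_zero_iff.2 hxy0), one_smul, add_sub_cancel]
  have hcone : η ∈ proxNormalCone S y := ⟨‖x - y‖, norm_pos_iff.2 hxy0, by rw [hx]; exact ⟨hy, hxy.symm⟩⟩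
  have hsing (s : ℝ) (hs : 0 ≤ s) (hsr : s < r) : projSet S (y + s • η) = {y} :=
    projSet_add_smul_eq_singleton hy hη hs hsr (hpr y hy η hcone hη r hr le_rfl)
  refine ⟨y, ?_, fun s hs hsr => hray s ▸ hsing s hs hsr⟩
  rw [← hx]
  exact hsing _ (norm_nonneg _) (by rwa [← dist_eq_norm, ← hxy])

theorem isProxRegular_of_exists_projSet_eq_singleton {n : ℕ} {S : Set (Euc n)} {r : ℝ}
    (hr : 0 < r)
    (h : ∀ x : Euc n, infDist x S < r → x ∉ S → ∃ y : Euc n, projSet S x = {y} ∧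
      ∀ s : ℝ, 0 ≤ s → s < r → projSet S (y + (s / ‖x - y‖) • (x - y)) = {y}) :
    IsProxRegular r S := by
  intro y hy η ⟨σ, hσ, hσy⟩ hη s hs hsr
  set σ₀ := min σ (r / 2)
  have hσ₀ : 0 < σ₀ := lt_min hσ (half_pos hr)
  have hσ₀r : σ₀ < r := (min_le_right _ _).trans_lt (half_lt_self hr)
  have hσ₀y : y ∈ projSet S (y + σ₀ • η) :=
    mem_projSet_add_smul_of_le hy hη hσ₀.le (min_le_left _ _) hσy
  have hdist := (mem_projSet_add_smul_iff hy hη hσ₀.le).1 hσ₀y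
  have hxS : y + σ₀ • η ∉ S := fun hmem => hσ₀.ne' (hdist ▸ infDist_zero_of_mem hmem)
  obtain ⟨z, hz, hzray⟩ := h _ (by rwa [hdist]) hxS
  obtain rfl : y = z := mem_singleton_iff.1 (hz ▸ hσ₀y)
  have hray (t : ℝ) (ht : 0 ≤ t) (htr : t < r) : projSet S (y + t • η) = {y} := by
    have := hzray t ht htr
    rwa [add_sub_cancel_left, norm_smul_of_nonneg hσ₀.le, hη, mul_one, smul_smul,
      div_mul_cancel₀ _ hσ₀.ne'] at this
  exact mem_projSet_add_smul_of_forall_mem_Ioo hy hη hs fun t ht =>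
    (hray t ht.1.le (ht.2.trans_le hsr)).symm ▸ mem_singleton y


/-- Proposition 2.3 (i)⇔(iv): `S` is `r`-prox-regular iff for every
`x ∈ U_r \ S` the projection `Π_S(x)` is a singleton `{y}` and
`Π_S(y + s (x − y)/|x − y|) = {y}` for every `s ∈ [0, r)`. -/
theorem stmt7 {n : ℕ} (S : Set (Euc n)) (hne : S.Nonempty) (hcl : IsClosed S)
    (r : ℝ) (hr : 0 < r) :
    IsProxRegular r S ↔
      ∀ x : Euc n, Metric.infDist x S < r → x ∉ S →
        ∃ y : Euc n, projSet S x = {y} ∧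
          ∀ s : ℝ, 0 ≤ s → s < r →
            projSet S (y + (s / ‖x - y‖) • (x - y)) = {y} :=
  ⟨fun hpr _ hxr hxS => hpr.exists_projSet_eq_singleton hne hcl hr hxr hxS,
    isProxRegular_of_exists_projSet_eq_singleton hr⟩
end
end

section
/- Let r > 0 and let S ⊆ ℝⁿ be an r-prox-regular set with 0 ∈ S, so that the metric projection Π_S is single-valued on {x : d_S(x) < r}. Then (1/δ)·sup{ |Π_S(x) − x| : x ∈ cl(B_δ) ∩ T^C_S(0) } → 0 as δ → 0⁺, where cl(B_δ) is the closed ball of radius δ centered at 0. -/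
/-!
Every Clarke tangent vector `v` at `0 ∈ S` satisfies `d_S(t v) = o(t)` as `t ↓ 0` (it lies in
the adjacent cone), and since `d_S` is `1`-Lipschitz, a finite `ε`-net of the unit vectors of
that cone makes the estimate uniform in the direction. Hence `d_S(x) = o(|x|)` uniformly for
`x ∈ T^C_S(0)`; as every `y ∈ Π_S(x)` has `|y − x| = d_S(x)`, the supremum is `o(δ)`.
-/

open Metric Set Filter

noncomputable section

open Topology

section AdjacentCone

variable {E : Type*} [NormedAddCommGroup E] [NormedSpace ℝ E]

/-- The adjacent tangent cone: directions `v` with `d_S(x + t v) = o(t)` as `t ↓ 0`. -/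
def adjacentCone (S : Set E) (x : E) : Set E :=
  {v | ∀ ε > 0, ∀ᶠ t in 𝓝[>] (0 : ℝ), infDist (x + t • v) S ≤ ε * t}

variable {S : Set E} {x v : E}

theorem smul_mem_adjacentCone (hv : v ∈ adjacentCone S x) {c : ℝ} (hc : 0 < c) :
    c • v ∈ adjacentCone S x := by
  intro ε hε
  filter_upwards [eventually_nhdsGT_zero_mul_left hc (hv (ε / c) (div_pos hε hc))] with t ht
  rw [smul_smul, mul_comm t c]
  calc _ ≤ ε / c * (c * t) := ht
    _ = ε * t := by field_simp

theorem eventually_forall_infDist_le_of_totallyBounded {K : Set E} (hK : TotallyBounded K)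
    (hKA : K ⊆ adjacentCone S x) {ε : ℝ} (hε : 0 < ε) :
    ∀ᶠ t in 𝓝[>] (0 : ℝ), ∀ u ∈ K, infDist (x + t • u) S ≤ ε * t := by
  obtain ⟨N, hNK, hN, hKN⟩ := finite_approx_of_totallyBounded hK (ε / 2) (half_pos hε)
  have hnet : ∀ᶠ t in 𝓝[>] (0 : ℝ), ∀ y ∈ N, infDist (x + t • y) S ≤ ε / 2 * t :=
    hN.eventually_all.2 fun y hy => hKA (hNK hy) _ (half_pos hε)
  filter_upwards [hnet, self_mem_nhdsWithin] with t hnet (ht : 0 < t) u hu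
  obtain ⟨y, hy, huy⟩ := mem_iUnion₂.1 (hKN hu)
  calc infDist (x + t • u) S ≤ infDist (x + t • y) S + dist (x + t • u) (x + t • y) :=
        infDist_le_infDist_add_dist
    _ ≤ ε / 2 * t + t * (ε / 2) := by
        rw [dist_add_left, dist_smul₀, Real.norm_of_nonneg ht.le]
        gcongr
        exacts [hnet y hy, (mem_ball.1 huy).le]
    _ = ε * t := by ring

theorem eventually_forall_closedBall_inter_adjacentCone_infDist_le [ProperSpace E] (hx : x ∈ S)
    {ε : ℝ} (hε : 0 < ε) :
    ∀ᶠ δ in 𝓝[>] (0 : ℝ), ∀ v ∈ closedBall (0 : E) δ ∩ adjacentCone S x,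
      infDist (x + v) S ≤ ε * δ := by
  have hsphere := eventually_forall_infDist_le_of_totallyBounded (S := S) (x := x)
    ((isCompact_sphere (0 : E) 1).totallyBounded.subset inter_subset_left) inter_subset_right hε
  obtain ⟨τ, hτ, hτsub⟩ := mem_nhdsGT_iff_exists_Ioo_subset.1 hsphere
  filter_upwards [Ioo_mem_nhdsGT hτ] with δ ⟨hδ, hδτ⟩ v ⟨hvδ, hvA⟩
  rw [mem_closedBall_zero_iff] at hvδ
  rcases eq_or_ne v 0 with rfl | hv
  · rw [add_zero, infDist_zero_of_mem hx]
    positivity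
  have hvpos : 0 < ‖v‖ := norm_pos_iff.2 hv
  have hunit : ‖v‖⁻¹ • v ∈ sphere (0 : E) 1 ∩ adjacentCone S x :=
    ⟨by simp [norm_smul, hv], smul_mem_adjacentCone hvA (inv_pos.2 hvpos)⟩
  have hray := hτsub ⟨hvpos, hvδ.trans_lt hδτ⟩ _ hunit
  rw [smul_inv_smul₀ hvpos.ne'] at hray
  exact hray.trans (by gcongr)

end AdjacentCone

theorem clarkeTangentCone_subset_adjacentCone {n : ℕ} {S : Set (Euc n)} {x : Euc n}
    (hx : x ∈ S) : clarkeTangentCone S x ⊆ adjacentCone S x := by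
  intro v hv ε hε
  set f := fun q : ℝ × Euc n => (infDist (q.2 + q.1 • v) S - infDist q.2 S) / q.1
  have hpos : ∀ᶠ q : ℝ × Euc n in 𝓝[>] 0 ×ˢ 𝓝 x, 0 < q.1 :=
    (eventually_mem_nhdsWithin (a := (0 : ℝ)) (s := Ioi 0)).prod_inl _
  have hbdd : IsBoundedUnder (· ≤ ·) (𝓝[>] 0 ×ˢ 𝓝 x) f := by
    refine isBoundedUnder_of_eventually_le (a := ‖v‖) ?_
    filter_upwards [hpos] with q hq
    rw [div_le_iff₀ hq]
    have := infDist_le_infDist_add_dist (x := q.2 + q.1 • v) (y := q.2) (s := S)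
    rw [dist_self_add_left, norm_smul, Real.norm_of_nonneg hq.le] at this
    linarith
  have hlt : ∀ᶠ q in 𝓝[>] 0 ×ˢ 𝓝 x, f q < ε :=
    eventually_lt_of_limsup_lt (hv.symm ▸ hε) hbdd
  have hray : ∀ᶠ t in 𝓝[>] (0 : ℝ), f (t, x) < ε :=
    (tendsto_id.prodMk tendsto_const_nhds).eventually hlt
  filter_upwards [hray, self_mem_nhdsWithin] with t ht (htpos : 0 < t)
  simp only [f, infDist_zero_of_mem hx, sub_zero, div_lt_iff₀ htpos] at ht
  exact ht.le

theorem stmt12_general {n : ℕ} (S : Set (Euc n)) (h0 : (0 : Euc n) ∈ S) :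
    Filter.Tendsto
      (fun δ : ℝ => (1 / δ) *
        sSup {d : ℝ | ∃ x ∈ Metric.closedBall (0 : Euc n) δ ∩ clarkeTangentCone S 0,
          ∃ y ∈ projSet S x, d = dist y x})
      (nhdsWithin (0 : ℝ) (Set.Ioi 0)) (nhds 0) := by
  refine Metric.tendsto_nhds.2 fun ε hε => ?_
  filter_upwards [self_mem_nhdsWithin,
    eventually_forall_closedBall_inter_adjacentCone_infDist_le h0 (half_pos hε)]
    with δ (hδ : 0 < δ) hball
  set A := {d : ℝ | ∃ x ∈ closedBall (0 : Euc n) δ ∩ clarkeTangentCone S 0,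
    ∃ y ∈ projSet S x, d = dist y x}
  have hA_le : sSup A ≤ ε / 2 * δ := by
    refine Real.sSup_le ?_ (by positivity)
    rintro _ ⟨x, ⟨hxδ, hxT⟩, y, hy, rfl⟩
    rw [dist_comm, hy.2, ← zero_add x]
    exact hball x ⟨hxδ, clarkeTangentCone_subset_adjacentCone h0 hxT⟩
  have hA_nonneg : 0 ≤ sSup A := Real.sSup_nonneg fun _ ⟨_, _, _, _, hd⟩ => hd ▸ dist_nonneg
  rw [Real.dist_eq, sub_zero, abs_of_nonneg (by positivity)]
  calc 1 / δ * sSup A ≤ 1 / δ * (ε / 2 * δ) := by gcongr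
    _ = ε / 2 := by field_simp
    _ < ε := half_lt_self hε

/-- if `S` is `r`-prox-regular and `0 ∈ S`, then
`(1/δ)·sup{ |Π_S(x) − x| : x ∈ cl(B_δ) ∩ T^C_S(0) } → 0` as `δ → 0⁺`. -/
theorem stmt12 {n : ℕ} (S : Set (Euc n)) (hne : S.Nonempty) (hcl : IsClosed S)
    (r : ℝ) (hr : 0 < r) (hpr : IsProxRegular r S) (h0 : (0 : Euc n) ∈ S) :
    Filter.Tendsto
      (fun δ : ℝ => (1 / δ) *
        sSup {d : ℝ | ∃ x ∈ Metric.closedBall (0 : Euc n) δ ∩ clarkeTangentCone S 0,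
          ∃ y ∈ projSet S x, d = dist y x})
      (nhdsWithin (0 : ℝ) (Set.Ioi 0)) (nhds 0) :=
  stmt12_general S h0
end
end

section
/- Let ẑ = (Ŝ, ŵ⁰, ŵ, ŷ⁰, ŷ, β̂) be a feasible extended process. The following are equivalent: (i) there is a local infimum gap at ẑ; (ii) ẑ is isolated; (iii) there exists r̂ > 0 such that inf{Φ(y⁰, y) : (y⁰, y, β) ∈ R^r_{W₊}(ẑ) ∩ (𝔗×[0,K])} = +∞ for every continuous function Φ : ℝ×ℝⁿ → ℝ and every r ∈ (0, r̂]. -/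
open Metric Set Filter MeasureTheory
open scoped RealInnerProductSpace

noncomputable section

abbrev CVec (m₁ m₂ : ℕ) := EuclideanSpace ℝ (Fin m₁ ⊕ Fin m₂)

/-- The data and standing hypotheses of the unbounded/impulsive optimal control problem:
`C¹` bounded vector fields `f, g₁, …, g_m` (`m = m₁ + m₂`, indexed by `Fin m₁ ⊕ Fin m₂`),
a `C¹` cost `Ψ`, a closed control cone `𝒞 = 𝒞₁ × 𝒞₂` where `𝒞₁` contains the coordinate
lines and `𝒞₂` contains no line, a closed target `𝔗 ⊆ [0,∞) × ℝⁿ`, an initial state and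
an energy bound `K ∈ (0, +∞]`. -/
structure Setup (n m₁ m₂ : ℕ) where
  f : Euc n → Euc n
  g : (Fin m₁ ⊕ Fin m₂) → Euc n → Euc n
  Ψ : ℝ × Euc n → ℝ
  C1 : Set (Euc m₁)
  C2 : Set (Euc m₂)
  C : Set (CVec m₁ m₂)
  T : Set (ℝ × Euc n)
  x0 : Euc n
  K : EReal
  hm : 1 ≤ m₁ + m₂
  hf : ContDiff ℝ 1 f
  hf_bdd : ∃ M : ℝ, ∀ x, ‖f x‖ ≤ M ∧ ‖fderiv ℝ f x‖ ≤ M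
  hg : ∀ i, ContDiff ℝ 1 (g i)
  hg_bdd : ∀ i, ∃ M : ℝ, ∀ x, ‖g i x‖ ≤ M ∧ ‖fderiv ℝ (g i) x‖ ≤ M
  hΨ : ContDiff ℝ 1 Ψ
  hC1_closed : IsClosed C1
  hC1_cone : ∀ a : ℝ, 0 ≤ a → ∀ w ∈ C1, a • w ∈ C1
  hC1_lines : ∀ (i : Fin m₁) (t : ℝ), t • (EuclideanSpace.single i (1 : ℝ)) ∈ C1
  hC2_closed : IsClosed C2
  hC2_cone : ∀ a : ℝ, 0 ≤ a → ∀ w ∈ C2, a • w ∈ C2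
  hC2_noline : ∀ v : Euc m₂, v ≠ 0 → ¬ (∀ t : ℝ, t • v ∈ C2)
  hC_eq : C = {w : CVec m₁ m₂ |
      WithLp.toLp 2 (fun i : Fin m₁ => w (Sum.inl i)) ∈ C1 ∧
        WithLp.toLp 2 (fun i : Fin m₂ => w (Sum.inr i)) ∈ C2}
  hT_closed : IsClosed T
  hT_sub : T ⊆ Set.Ici (0 : ℝ) ×ˢ Set.univ
  hK : 0 < K

variable {n m₁ m₂ : ℕ}

/-- An extended process `(S, w⁰, w, y⁰, y, β)`: `S > 0`, the controls `(w⁰, w)` are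
measurable with `w⁰ ≥ 0`, `w ∈ 𝒞` and `w⁰ + |w| = 1` a.e. on `[0,S]`, while `(y⁰, y, β)`
is the (absolutely continuous) solution, in integral form, of
`dy⁰/ds = w⁰`, `dy/ds = f(y)w⁰ + Σᵢ gᵢ(y)wⁱ`, `dβ/ds = |w|`, with
`(y⁰, y, β)(0) = (0, x̌, 0)`. -/
structure ExtProcess (P : Setup n m₁ m₂) where
  S : ℝ
  w0 : ℝ → ℝ
  w : ℝ → CVec m₁ m₂
  y0 : ℝ → ℝ
  y : ℝ → Euc n
  β : ℝ → ℝ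
  hS : 0 < S
  hw0_meas : AEStronglyMeasurable w0 (volume.restrict (Set.Icc 0 S))
  hw_meas : AEStronglyMeasurable w (volume.restrict (Set.Icc 0 S))
  hw0_nonneg : ∀ᵐ s ∂(volume.restrict (Set.Icc 0 S)), 0 ≤ w0 s
  hw_mem : ∀ᵐ s ∂(volume.restrict (Set.Icc 0 S)), w s ∈ P.C
  hw_norm : ∀ᵐ s ∂(volume.restrict (Set.Icc 0 S)), w0 s + ‖w s‖ = 1
  hy_cont : ContinuousOn y (Set.Icc 0 S)
  hy0 : ∀ s ∈ Set.Icc 0 S, y0 s = ∫ t in (0 : ℝ)..s, w0 t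
  hy : ∀ s ∈ Set.Icc 0 S, y s = P.x0 +
    ∫ t in (0 : ℝ)..s, (w0 t • P.f (y t) + ∑ i : Fin m₁ ⊕ Fin m₂, w t i • P.g i (y t))
  hβ : ∀ s ∈ Set.Icc 0 S, β s = ∫ t in (0 : ℝ)..s, ‖w t‖

variable {P : Setup n m₁ m₂}

/-- The control distance `d(z₁, z₂) := |S₁ − S₂| + ‖(w₂⁰, w₂) − (w₁⁰, w₁)‖_{L¹([0, S₁∧S₂])}`. -/
def dproc (z₁ z₂ : ExtProcess P) : ℝ :=
  |z₁.S - z₂.S| +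
    ∫ s in Set.Icc 0 (min z₁.S z₂.S), (|z₁.w0 s - z₂.w0 s| + ‖z₁.w s - z₂.w s‖)

/-- The (time, state, energy) endpoint of an extended process. -/
def endpt (z : ExtProcess P) : ℝ × Euc n × ℝ := (z.y0 z.S, z.y z.S, z.β z.S)

/-- A feasible extended process: `(y⁰(S), y(S)) ∈ 𝔗` and `β(S) ≤ K`. -/
def Feasible (z : ExtProcess P) : Prop :=
  (z.y0 z.S, z.y z.S) ∈ P.T ∧ (z.β z.S : EReal) ≤ P.K

/-- An embedded strict-sense process: `w⁰ > 0` a.e. -/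
def StrictSense (z : ExtProcess P) : Prop :=
  ∀ᵐ s ∂(volume.restrict (Set.Icc 0 z.S)), 0 < z.w0 s

/-- The strict-sense reachable set of radius `r` around `ẑ`: endpoints `(y⁰, y, β)(S)` of
embedded strict-sense processes `z` with `d(z, ẑ) < r`. -/
def Reach (zh : ExtProcess P) (r : ℝ) : Set (ℝ × Euc n × ℝ) :=
  {e | ∃ z : ExtProcess P, StrictSense z ∧ dproc z zh < r ∧ e = endpt z}

/-- `R^r_{W₊}(ẑ) ∩ (𝔗 × [0,K])`: the feasible part of the strict-sense reachable set. -/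
def FeasReach (zh : ExtProcess P) (r : ℝ) : Set (ℝ × Euc n × ℝ) :=
  {e ∈ Reach zh r | (e.1, e.2.1) ∈ P.T ∧ (e.2.2 : EReal) ≤ P.K}

/-- There is a local infimum gap at the feasible extended process `ẑ`:
`Ψ(ŷ⁰(Ŝ), ŷ(Ŝ)) < inf { Ψ(y⁰, y) : (y⁰,y,β) ∈ R^r_{W₊}(ẑ) ∩ (𝔗×[0,K]) }` for some `r > 0`. -/
def HasLocalGap (zh : ExtProcess P) : Prop :=
  ∃ r > (0 : ℝ),
    ((P.Ψ (zh.y0 zh.S, zh.y zh.S) : ℝ) : EReal) <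
      ⨅ e ∈ FeasReach zh r, ((P.Ψ (e.1, e.2.1) : ℝ) : EReal)

/-- `ẑ` is isolated: no feasible embedded strict-sense process in some `d`-neighborhood. -/
def Isolated (zh : ExtProcess P) : Prop :=
  ∃ r > (0 : ℝ), FeasReach zh r = ∅

/-!
For (i) ⇒ (ii) the point is that the endpoint `(y⁰, y, β)(S)` depends Lipschitz-continuously
on the control in the metric `d`. On the common interval `[0, S₁ ∧ S₂]` Grönwall's inequality
bounds the distance between two trajectories of the extended system `(y⁰, y, β)` by the `L¹`
distance of their controls, and after that time both trajectories move with bounded speed.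
So feasible strict-sense processes `d`-close to `ẑ` have cost close to `Ψ(ŷ⁰(Ŝ), ŷ(Ŝ))`, which a
gap forbids unless there are none. The remaining implications hold because an infimum of real
numbers is `+∞` only over the empty set.
-/

open scoped NNReal

section IntegralCurves

variable {E : Type*} [NormedAddCommGroup E] [NormedSpace ℝ E]

theorem le_mul_exp_of_le_add_mul_integral {φ : ℝ → ℝ} {ε L T : ℝ}
    (hφ : ContinuousOn φ (Icc 0 T)) (hL : 0 ≤ L)
    (h : ∀ x ∈ Icc 0 T, φ x ≤ ε + L * ∫ t in (0 : ℝ)..x, φ t) :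
    ∀ x ∈ Icc 0 T, φ x ≤ ε * Real.exp (L * x) := by
  intro x hx
  have hT : 0 ≤ T := hx.1.trans hx.2
  -- extend `φ` continuously off `[0, T]`, so that its primitive is differentiable everywhere
  set φ' : ℝ → ℝ := IccExtend hT (domRestrict (Icc 0 T) φ)
  have hφ' : Continuous φ' := continuous_IccExtend_iff.2 hφ.domRestrict
  have hφφ' : ∀ y ∈ Icc 0 T, φ' y = φ y := fun y hy => IccExtend_of_mem hT _ hy
  have hint : ∀ y ∈ Icc 0 T, ∫ t in (0 : ℝ)..y, φ' t = ∫ t in (0 : ℝ)..y, φ t := fun y hy =>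
    intervalIntegral.integral_congr fun t ht =>
      hφφ' t (uIcc_subset_Icc (left_mem_Icc.2 hT) hy ht)
  set ψ : ℝ → ℝ := fun y => ∫ t in (0 : ℝ)..y, φ' t
  have hψ : ∀ y, HasDerivAt ψ (φ' y) y :=
    fun y => (hφ'.integral_hasStrictDerivAt 0 y).hasDerivAt
  have hψ_le : ψ x ≤ gronwallBound 0 L ε x := by
    have := le_gronwallBound_of_liminf_deriv_right_le (f := ψ) (f' := φ') (δ := 0) (K := L)
      (ε := ε) (a := 0) (b := T)
      (fun y _ => (hψ y).continuousAt.continuousWithinAt)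
      (fun y _ r hr => (hψ y).hasDerivWithinAt.liminf_right_slope_le hr)
      (by simp [ψ])
      (fun y hy => by
        simp only [ψ]
        rw [hφφ' y (Ico_subset_Icc_self hy), hint y (Ico_subset_Icc_self hy)]
        linarith [h y (Ico_subset_Icc_self hy)])
      x hx
    simpa using this
  calc φ x ≤ ε + L * ψ x := by simp only [ψ]; rw [hint x hx]; exact h x hx
    _ ≤ ε + L * gronwallBound 0 L ε x := by gcongr
    _ = ε * Real.exp (L * x) := by
      rcases hL.eq_or_lt with rfl | hL
      · simp
      · rw [gronwallBound_of_K_ne_0 hL.ne']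
        field_simp
        ring

theorem lipschitzOnWith_of_eq_add_integral {F v : ℝ → E} {c : E} {S : ℝ} {L : ℝ≥0}
    (hF : ∀ s ∈ Icc 0 S, F s = c + ∫ u in (0 : ℝ)..s, v u) (hv : IntegrableOn v (Icc 0 S))
    (hvL : ∀ᵐ u ∂volume.restrict (Icc 0 S), ‖v u‖ ≤ L) :
    LipschitzOnWith L F (Icc 0 S) := by
  refine LipschitzOnWith.of_dist_le_mul fun s hs t ht => ?_
  have hint : ∀ {a b}, a ∈ Icc 0 S → b ∈ Icc 0 S → IntervalIntegrable v volume a b :=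
    fun ha hb => (hv.mono_set (uIcc_subset_Icc ha hb)).intervalIntegrable
  have h0 : (0 : ℝ) ∈ Icc 0 S := left_mem_Icc.2 (hs.1.trans hs.2)
  rw [dist_eq_norm, hF s hs, hF t ht, add_sub_add_left_eq_sub,
    intervalIntegral.integral_interval_sub_left (hint h0 hs) (hint h0 ht), Real.dist_eq]
  refine intervalIntegral.norm_integral_le_of_norm_le_const_ae (f := v) ?_
  filter_upwards [(ae_restrict_iff' measurableSet_Icc).1 hvL] with u hu hu'
  exact hu (uIcc_subset_Icc ht hs (uIoc_subset_uIcc hu'))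

theorem norm_sub_le_mul_exp_of_eq_add_integral {F₁ F₂ v₁ v₂ : ℝ → E} {g : ℝ → ℝ} {c : E}
    {T L : ℝ} (hT : 0 ≤ T) (hL : 0 ≤ L)
    (hF₁ : ∀ s ∈ Icc 0 T, F₁ s = c + ∫ u in (0 : ℝ)..s, v₁ u)
    (hF₂ : ∀ s ∈ Icc 0 T, F₂ s = c + ∫ u in (0 : ℝ)..s, v₂ u)
    (hv₁ : IntegrableOn v₁ (Icc 0 T)) (hv₂ : IntegrableOn v₂ (Icc 0 T))
    (hg : IntegrableOn g (Icc 0 T)) (hg0 : ∀ t ∈ Icc 0 T, 0 ≤ g t)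
    (hv : ∀ᵐ t ∂volume.restrict (Icc 0 T), ‖v₁ t - v₂ t‖ ≤ L * ‖F₁ t - F₂ t‖ + g t) :
    ‖F₁ T - F₂ T‖ ≤ (∫ t in (0 : ℝ)..T, g t) * Real.exp (L * T) := by
  have hsub : ∀ s ∈ Icc 0 T, uIcc 0 s ⊆ Icc 0 T :=
    fun s hs => uIcc_subset_Icc (left_mem_Icc.2 hT) hs
  have hΔ : ∀ s ∈ Icc 0 T, F₁ s - F₂ s = ∫ u in (0 : ℝ)..s, v₁ u - v₂ u := fun s hs => by
    rw [hF₁ s hs, hF₂ s hs, add_sub_add_left_eq_sub, intervalIntegral.integral_sub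
      (hv₁.mono_set (hsub s hs)).intervalIntegrable (hv₂.mono_set (hsub s hs)).intervalIntegrable]
  have hφ : ContinuousOn (fun s => ‖F₁ s - F₂ s‖) (Icc 0 T) := by
    refine ContinuousOn.norm (ContinuousOn.congr ?_ hΔ)
    simpa [uIcc_of_le hT] using
      intervalIntegral.continuousOn_primitive_interval (a := 0) (b := T) (μ := volume)
        (by rw [uIcc_of_le hT]; exact hv₁.sub hv₂)
  refine le_mul_exp_of_le_add_mul_integral hφ hL (fun x hx => ?_) T (right_mem_Icc.2 hT)
  have hgi : IntervalIntegrable g volume 0 x := (hg.mono_set (hsub x hx)).intervalIntegrable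
  have hφi : IntervalIntegrable (fun s => ‖F₁ s - F₂ s‖) volume 0 x :=
    (hφ.mono (hsub x hx)).intervalIntegrable
  calc ‖F₁ x - F₂ x‖ ≤ ∫ t in (0 : ℝ)..x, (L * ‖F₁ t - F₂ t‖ + g t) := by
        rw [hΔ x hx]
        refine intervalIntegral.norm_integral_le_of_norm_le hx.1 ?_ (hφi.const_mul L |>.add hgi)
        filter_upwards [(ae_restrict_iff' measurableSet_Icc).1 hv] with t ht ht'
        exact ht ⟨ht'.1.le, ht'.2.trans hx.2⟩
    _ = (∫ t in (0 : ℝ)..x, g t) + L * ∫ t in (0 : ℝ)..x, ‖F₁ t - F₂ t‖ := by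
        rw [intervalIntegral.integral_add (hφi.const_mul L) hgi,
          intervalIntegral.integral_const_mul, add_comm]
    _ ≤ (∫ t in (0 : ℝ)..T, g t) + L * ∫ t in (0 : ℝ)..x, ‖F₁ t - F₂ t‖ := by
        gcongr
        refine intervalIntegral.integral_mono_interval le_rfl hx.1 hx.2 ?_
          (hg.mono_set (hsub T (right_mem_Icc.2 hT))).intervalIntegrable
        filter_upwards [ae_restrict_mem measurableSet_Ioc] with t ht
        exact hg0 t (Ioc_subset_Icc_self ht)

end IntegralCurves

theorem dist_le_dist_min_add_mul_abs_sub {α : Type*} [PseudoMetricSpace α] {F₁ F₂ : ℝ → α}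
    {K : ℝ≥0} {S₁ S₂ : ℝ} (hS₁ : 0 ≤ S₁) (hS₂ : 0 ≤ S₂)
    (h₁ : LipschitzOnWith K F₁ (Icc 0 S₁)) (h₂ : LipschitzOnWith K F₂ (Icc 0 S₂)) :
    dist (F₁ S₁) (F₂ S₂) ≤ dist (F₁ (min S₁ S₂)) (F₂ (min S₁ S₂)) + K * |S₁ - S₂| := by
  set T := min S₁ S₂
  have hT : 0 ≤ T := le_min hS₁ hS₂
  have e₁ := h₁.dist_le_mul S₁ (right_mem_Icc.2 hS₁) T ⟨hT, min_le_left _ _⟩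
  have e₂ := h₂.dist_le_mul T ⟨hT, min_le_right _ _⟩ S₂ (right_mem_Icc.2 hS₂)
  have hsum : dist S₁ T + dist T S₂ = |S₁ - S₂| := by
    simp only [Real.dist_eq, T]
    rcases le_total S₁ S₂ with h | h
    · simp [min_eq_left h, abs_of_nonpos (sub_nonpos.2 h)]
    · simp [min_eq_right h, abs_of_nonneg (sub_nonneg.2 h)]
  calc dist (F₁ S₁) (F₂ S₂) ≤ dist (F₁ S₁) (F₁ T) + dist (F₁ T) (F₂ T) + dist (F₂ T) (F₂ S₂) :=
        dist_triangle4 _ _ _ _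
    _ ≤ dist (F₁ T) (F₂ T) + K * |S₁ - S₂| := by rw [← hsum]; linarith

section ControlField

variable {ι E : Type*} [Fintype ι] [NormedAddCommGroup E] [NormedSpace ℝ E]

def controlField (f : E → E) (g : ι → E → E) (a : ℝ) (w : EuclideanSpace ℝ ι) (x : E) : E :=
  a • f x + ∑ i, w i • g i x

def extField (f : E → E) (g : ι → E → E) (a : ℝ) (w : EuclideanSpace ℝ ι) (x : E) :
    ℝ × E × ℝ :=
  (a, controlField f g a w x, ‖w‖)

variable (ι) in
/-- Bounds both the speed `‖extField f g a w x‖` and the Lipschitz constant of `extField` in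
`(x, a, w)` when `|a| ≤ 1`, `‖w‖ ≤ 1`, and `M` bounds `f`, `gᵢ` and their Lipschitz constants. -/
def extFieldBound (M : ℝ≥0) : ℝ≥0 := M * (1 + Fintype.card ι) + 1

theorem norm_smul_sub_smul_le_of_lipschitzWith {h : E → E} {M : ℝ≥0}
    (hb : ∀ x, ‖h x‖ ≤ M) (hL : LipschitzWith M h) {a b : ℝ} (ha : |a| ≤ 1) (x x' : E) :
    ‖a • h x - b • h x'‖ ≤ M * ‖x - x'‖ + M * |a - b| :=
  calc ‖a • h x - b • h x'‖ = ‖a • (h x - h x') + (a - b) • h x'‖ := by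
        rw [smul_sub, sub_smul]; abel_nf
    _ ≤ |a| * ‖h x - h x'‖ + |a - b| * ‖h x'‖ := by
        simpa only [norm_smul, Real.norm_eq_abs] using
          norm_add_le (a • (h x - h x')) ((a - b) • h x')
    _ ≤ 1 * (M * ‖x - x'‖) + |a - b| * M := by
        gcongr
        exacts [hL.norm_sub_le x x', hb x']
    _ = M * ‖x - x'‖ + M * |a - b| := by ring

variable {f : E → E} {g : ι → E → E} {M : ℝ≥0}

theorem norm_controlField_le (hf : ∀ x, ‖f x‖ ≤ M) (hg : ∀ i x, ‖g i x‖ ≤ M) {a : ℝ}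
    {w : EuclideanSpace ℝ ι} (ha : |a| ≤ 1) (hw : ‖w‖ ≤ 1) (x : E) :
    ‖controlField f g a w x‖ ≤ M * (1 + Fintype.card ι) := by
  have hterm : ∀ (c : ℝ) (u : E), |c| ≤ 1 → ‖u‖ ≤ M → ‖c • u‖ ≤ M := fun c u hc hu => by
    rw [norm_smul, Real.norm_eq_abs]
    nlinarith [abs_nonneg c, norm_nonneg u]
  calc ‖controlField f g a w x‖ ≤ ‖a • f x‖ + ∑ i, ‖w i • g i x‖ :=
        (norm_add_le _ _).trans (by gcongr; exact norm_sum_le _ _)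
    _ ≤ M + ∑ _i : ι, (M : ℝ) := by
        gcongr with i
        exacts [hterm _ _ ha (hf x), hterm _ _ ((PiLp.norm_apply_le w i).trans hw) (hg i x)]
    _ = M * (1 + Fintype.card ι) := by simp; ring

theorem norm_controlField_sub_le (hf : ∀ x, ‖f x‖ ≤ M) (hfL : LipschitzWith M f)
    (hg : ∀ i x, ‖g i x‖ ≤ M) (hgL : ∀ i, LipschitzWith M (g i)) {a b : ℝ}
    {w v : EuclideanSpace ℝ ι} (ha : |a| ≤ 1) (hw : ‖w‖ ≤ 1) (x x' : E) :
    ‖controlField f g a w x - controlField f g b v x'‖ ≤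
      M * (1 + Fintype.card ι) * (‖x - x'‖ + |a - b| + ‖w - v‖) := by
  have hsplit : controlField f g a w x - controlField f g b v x' =
      (a • f x - b • f x') + ∑ i, (w i • g i x - v i • g i x') := by
    simp only [controlField, Finset.sum_sub_distrib]; abel
  have hwi : ∀ i, |w i - v i| ≤ ‖w - v‖ := fun i => by
    simpa only [PiLp.sub_apply, Real.norm_eq_abs] using PiLp.norm_apply_le (w - v) i
  calc ‖controlField f g a w x - controlField f g b v x'‖
        ≤ ‖a • f x - b • f x'‖ + ∑ i, ‖w i • g i x - v i • g i x'‖ := by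
        rw [hsplit]; exact (norm_add_le _ _).trans (by gcongr; exact norm_sum_le _ _)
    _ ≤ (M * ‖x - x'‖ + M * |a - b|) + ∑ _i : ι, (M * ‖x - x'‖ + M * ‖w - v‖) := by
        gcongr with i
        · exact norm_smul_sub_smul_le_of_lipschitzWith hf hfL ha x x'
        · refine (norm_smul_sub_smul_le_of_lipschitzWith (hg i) (hgL i)
            ((PiLp.norm_apply_le w i).trans hw) x x').trans ?_
          gcongr
          exact hwi i
    _ ≤ M * (1 + Fintype.card ι) * (‖x - x'‖ + |a - b| + ‖w - v‖) := by
        simp only [Finset.sum_const, Finset.card_univ, nsmul_eq_mul]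
        have : 0 ≤ (M : ℝ) * ‖w - v‖ + Fintype.card ι * M * |a - b| := by positivity
        linarith

theorem norm_extField_le (hf : ∀ x, ‖f x‖ ≤ M) (hg : ∀ i x, ‖g i x‖ ≤ M) {a : ℝ}
    {w : EuclideanSpace ℝ ι} (ha : |a| ≤ 1) (hw : ‖w‖ ≤ 1) (x : E) :
    ‖extField f g a w x‖ ≤ extFieldBound ι M := by
  have := norm_controlField_le hf hg ha hw x
  have hL : 0 ≤ (M : ℝ) * (1 + Fintype.card ι) := by positivity
  simp only [extField, extFieldBound, Prod.norm_def, Real.norm_eq_abs, abs_norm]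
  push_cast
  exact max_le (by linarith) (max_le (by linarith) (by linarith))

theorem norm_extField_sub_le (hf : ∀ x, ‖f x‖ ≤ M) (hfL : LipschitzWith M f)
    (hg : ∀ i x, ‖g i x‖ ≤ M) (hgL : ∀ i, LipschitzWith M (g i)) {a b : ℝ}
    {w v : EuclideanSpace ℝ ι} (ha : |a| ≤ 1) (hw : ‖w‖ ≤ 1) (x x' : E) :
    ‖extField f g a w x - extField f g b v x'‖ ≤
      extFieldBound ι M * (‖x - x'‖ + |a - b| + ‖w - v‖) := by
  have hcf := norm_controlField_sub_le hf hfL hg hgL (v := v) (b := b) ha hw x x'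
  have hnorm : |‖w‖ - ‖v‖| ≤ ‖w - v‖ := abs_norm_sub_norm_le w v
  simp only [extField, extFieldBound, Prod.mk_sub_mk, Prod.norm_def, Real.norm_eq_abs]
  push_cast
  have hL : 0 ≤ (M : ℝ) * (1 + Fintype.card ι) * (‖x - x'‖ + |a - b| + ‖w - v‖) := by positivity
  have := norm_nonneg (x - x')
  have := abs_nonneg (a - b)
  have := norm_nonneg (w - v)
  refine max_le ?_ (max_le ?_ ?_) <;> linarith

end ControlField

namespace Setup

structure FieldBound (P : Setup n m₁ m₂) (M : ℝ≥0) : Prop where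
  norm_f_le : ∀ x, ‖P.f x‖ ≤ M
  lipschitzWith_f : LipschitzWith M P.f
  norm_g_le : ∀ i x, ‖P.g i x‖ ≤ M
  lipschitzWith_g : ∀ i, LipschitzWith M (P.g i)

theorem exists_fieldBound (P : Setup n m₁ m₂) : ∃ M, P.FieldBound M := by
  obtain ⟨Mf, hMf⟩ := P.hf_bdd
  choose Mg hMg using P.hg_bdd
  set M : ℝ≥0 := Mf.toNNReal + ∑ i, (Mg i).toNNReal
  have hMf_le : Mf ≤ M := (Real.le_coe_toNNReal Mf).trans (NNReal.coe_le_coe.2 le_self_add)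
  have hMg_le : ∀ i, Mg i ≤ M := fun i => (Real.le_coe_toNNReal (Mg i)).trans <|
    NNReal.coe_le_coe.2 <|
      (Finset.single_le_sum (f := fun j => (Mg j).toNNReal) (fun _ _ => zero_le)
        (Finset.mem_univ i)).trans le_add_self
  refine ⟨M, fun x => (hMf x).1.trans hMf_le, ?_, fun i x => (hMg i x).1.trans (hMg_le i),
    fun i => ?_⟩
  · exact lipschitzWith_of_nnnorm_fderiv_le (P.hf.differentiable one_ne_zero) fun x => by
      rw [← NNReal.coe_le_coe, coe_nnnorm]; exact (hMf x).2.trans hMf_le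
  · exact lipschitzWith_of_nnnorm_fderiv_le ((P.hg i).differentiable one_ne_zero) fun x => by
      rw [← NNReal.coe_le_coe, coe_nnnorm]; exact (hMg i x).2.trans (hMg_le i)

end Setup

namespace ExtProcess

variable (z : ExtProcess P)

def traj (s : ℝ) : ℝ × Euc n × ℝ := (z.y0 s, z.y s, z.β s)

def velocity (t : ℝ) : ℝ × Euc n × ℝ := extField P.f P.g (z.w0 t) (z.w t) (z.y t)

theorem ae_abs_w0_le_and_norm_w_le :
    ∀ᵐ s ∂volume.restrict (Icc 0 z.S), |z.w0 s| ≤ 1 ∧ ‖z.w s‖ ≤ 1 := by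
  filter_upwards [z.hw0_nonneg, z.hw_norm] with s h0 h1
  rw [abs_of_nonneg h0]
  constructor <;> linarith [norm_nonneg (z.w s)]

theorem integrableOn_w0 : IntegrableOn z.w0 (Icc 0 z.S) :=
  IntegrableOn.of_bound measure_Icc_lt_top z.hw0_meas 1 <| by
    filter_upwards [z.ae_abs_w0_le_and_norm_w_le] with s hs using hs.1

theorem integrableOn_w : IntegrableOn z.w (Icc 0 z.S) :=
  IntegrableOn.of_bound measure_Icc_lt_top z.hw_meas 1 <| by
    filter_upwards [z.ae_abs_w0_le_and_norm_w_le] with s hs using hs.2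

theorem integrableOn_velocity : IntegrableOn z.velocity (Icc 0 z.S) := by
  obtain ⟨M, hM⟩ := P.exists_fieldBound
  have hy : AEStronglyMeasurable z.y (volume.restrict (Icc 0 z.S)) :=
    z.hy_cont.aestronglyMeasurable measurableSet_Icc
  have hcf : AEStronglyMeasurable (fun t => controlField P.f P.g (z.w0 t) (z.w t) (z.y t))
      (volume.restrict (Icc 0 z.S)) :=
    (z.hw0_meas.smul (P.hf.continuous.comp_aestronglyMeasurable hy)).add <|
      Finset.aestronglyMeasurable_fun_sum _ fun i _ =>
        ((EuclideanSpace.proj i).continuous.comp_aestronglyMeasurable z.hw_meas).smul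
          ((P.hg i).continuous.comp_aestronglyMeasurable hy)
  refine IntegrableOn.of_bound measure_Icc_lt_top
    (z.hw0_meas.prodMk (hcf.prodMk z.hw_meas.norm)) (extFieldBound (Fin m₁ ⊕ Fin m₂) M) ?_
  filter_upwards [z.ae_abs_w0_le_and_norm_w_le] with t ht using
    norm_extField_le hM.norm_f_le hM.norm_g_le ht.1 ht.2 _

theorem traj_eq_add_integral :
    ∀ s ∈ Icc 0 z.S, z.traj s = (0, P.x0, 0) + ∫ t in (0 : ℝ)..s, z.velocity t := by
  intro s hs
  have hV : IntervalIntegrable z.velocity volume 0 s :=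
    (z.integrableOn_velocity.mono_set
      (uIcc_subset_Icc (left_mem_Icc.2 z.hS.le) hs)).intervalIntegrable
  have h₁ := (ContinuousLinearMap.fst ℝ ℝ (Euc n × ℝ)).intervalIntegral_comp_comm hV
  have h₂ := ((ContinuousLinearMap.fst ℝ (Euc n) ℝ).comp
    (ContinuousLinearMap.snd ℝ ℝ (Euc n × ℝ))).intervalIntegral_comp_comm hV
  have h₃ := ((ContinuousLinearMap.snd ℝ (Euc n) ℝ).comp
    (ContinuousLinearMap.snd ℝ ℝ (Euc n × ℝ))).intervalIntegral_comp_comm hV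
  simp only [ContinuousLinearMap.coe_fst', ContinuousLinearMap.coe_snd',
    ContinuousLinearMap.coe_comp, Function.comp_apply] at h₁ h₂ h₃
  refine Prod.ext ?_ (Prod.ext ?_ ?_)
  · rw [Prod.fst_add, ← h₁, zero_add, traj, z.hy0 s hs]; rfl
  · rw [Prod.snd_add, Prod.fst_add, ← h₂, traj, z.hy s hs]; rfl
  · rw [Prod.snd_add, Prod.snd_add, ← h₃, zero_add, traj, z.hβ s hs]; rfl

variable {M : ℝ≥0}

theorem lipschitzOnWith_traj (hM : P.FieldBound M) :
    LipschitzOnWith (extFieldBound (Fin m₁ ⊕ Fin m₂) M) z.traj (Icc 0 z.S) :=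
  lipschitzOnWith_of_eq_add_integral z.traj_eq_add_integral z.integrableOn_velocity <| by
    filter_upwards [z.ae_abs_w0_le_and_norm_w_le] with t ht using
      norm_extField_le hM.norm_f_le hM.norm_g_le ht.1 ht.2 _

theorem norm_traj_sub_traj_le (hM : P.FieldBound M) (zh : ExtProcess P) :
    ‖z.traj (min z.S zh.S) - zh.traj (min z.S zh.S)‖ ≤
      (∫ t in (0 : ℝ)..min z.S zh.S, extFieldBound (Fin m₁ ⊕ Fin m₂) M *
          (|z.w0 t - zh.w0 t| + ‖z.w t - zh.w t‖)) *
        Real.exp (extFieldBound (Fin m₁ ⊕ Fin m₂) M * min z.S zh.S) := by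
  set T := min z.S zh.S
  have hz : Icc 0 T ⊆ Icc 0 z.S := Icc_subset_Icc_right (min_le_left _ _)
  have hzh : Icc 0 T ⊆ Icc 0 zh.S := Icc_subset_Icc_right (min_le_right _ _)
  have hK : (0 : ℝ) ≤ extFieldBound (Fin m₁ ⊕ Fin m₂) M := NNReal.coe_nonneg _
  refine norm_sub_le_mul_exp_of_eq_add_integral (le_min z.hS.le zh.hS.le) hK
    (fun s hs => z.traj_eq_add_integral s (hz hs))
    (fun s hs => zh.traj_eq_add_integral s (hzh hs))
    (z.integrableOn_velocity.mono_set hz) (zh.integrableOn_velocity.mono_set hzh)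
    ((((z.integrableOn_w0.mono_set hz).sub (zh.integrableOn_w0.mono_set hzh)).abs.add
      ((z.integrableOn_w.mono_set hz).sub (zh.integrableOn_w.mono_set hzh)).norm).const_mul _)
    (fun t _ => by positivity) ?_
  filter_upwards [ae_restrict_of_ae_restrict_of_subset hz z.ae_abs_w0_le_and_norm_w_le]
    with t ht
  have hy : ‖z.y t - zh.y t‖ ≤ ‖z.traj t - zh.traj t‖ :=
    (norm_fst_le (z.traj t - zh.traj t).2).trans (norm_snd_le _)
  calc ‖z.velocity t - zh.velocity t‖
      ≤ extFieldBound (Fin m₁ ⊕ Fin m₂) M *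
          (‖z.y t - zh.y t‖ + |z.w0 t - zh.w0 t| + ‖z.w t - zh.w t‖) :=
        norm_extField_sub_le hM.norm_f_le hM.lipschitzWith_f hM.norm_g_le hM.lipschitzWith_g
          ht.1 ht.2 _ _
    _ ≤ _ := by linarith [mul_le_mul_of_nonneg_left hy hK]

end ExtProcess

theorem dist_endpt_le {M : ℝ≥0} (hM : P.FieldBound M) (z zh : ExtProcess P) :
    dist (endpt z) (endpt zh) ≤
      extFieldBound (Fin m₁ ⊕ Fin m₂) M *
        Real.exp (extFieldBound (Fin m₁ ⊕ Fin m₂) M * zh.S) * dproc z zh := by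
  set K : ℝ := (extFieldBound (Fin m₁ ⊕ Fin m₂) M : ℝ)
  set T := min z.S zh.S
  set D := ∫ s in Icc 0 T, (|z.w0 s - zh.w0 s| + ‖z.w s - zh.w s‖)
  have hK : 0 ≤ K := NNReal.coe_nonneg _
  have hD : 0 ≤ D := setIntegral_nonneg measurableSet_Icc fun _ _ => by positivity
  have hend := dist_le_dist_min_add_mul_abs_sub z.hS.le zh.hS.le
    (z.lipschitzOnWith_traj hM) (zh.lipschitzOnWith_traj hM)
  have hT := z.norm_traj_sub_traj_le hM zh
  rw [intervalIntegral.integral_const_mul,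
    intervalIntegral.integral_of_le (le_min z.hS.le zh.hS.le), ← integral_Icc_eq_integral_Ioc] at hT
  have hexp : Real.exp (K * T) ≤ Real.exp (K * zh.S) := by
    gcongr; exact min_le_right _ _
  have hexp₁ : 1 ≤ Real.exp (K * zh.S) := Real.one_le_exp (mul_nonneg hK zh.hS.le)
  change dist (z.traj z.S) (zh.traj zh.S) ≤ K * Real.exp (K * zh.S) * (|z.S - zh.S| + D)
  rw [dist_eq_norm, dist_eq_norm] at hend
  rw [dist_eq_norm]
  calc ‖z.traj z.S - zh.traj zh.S‖ ≤ K * D * Real.exp (K * T) + K * |z.S - zh.S| := by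
        linarith
    _ ≤ K * D * Real.exp (K * zh.S) + K * |z.S - zh.S| * Real.exp (K * zh.S) :=
        add_le_add (mul_le_mul_of_nonneg_left hexp (mul_nonneg hK hD))
          (le_mul_of_one_le_right (mul_nonneg hK (abs_nonneg _)) hexp₁)
    _ = K * Real.exp (K * zh.S) * (|z.S - zh.S| + D) := by ring

theorem exists_dist_endpt_lt_of_dproc_lt (zh : ExtProcess P) {ε : ℝ} (hε : 0 < ε) :
    ∃ δ > 0, ∀ z : ExtProcess P, dproc z zh < δ → dist (endpt z) (endpt zh) < ε := by
  obtain ⟨M, hM⟩ := P.exists_fieldBound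
  set C : ℝ := extFieldBound (Fin m₁ ⊕ Fin m₂) M *
    Real.exp (extFieldBound (Fin m₁ ⊕ Fin m₂) M * zh.S)
  have hC : 0 < C := mul_pos (by simp only [extFieldBound]; positivity) (Real.exp_pos _)
  refine ⟨ε / C, div_pos hε hC, fun z hz => ?_⟩
  calc dist (endpt z) (endpt zh) ≤ C * dproc z zh := dist_endpt_le hM z zh
    _ < C * (ε / C) := mul_lt_mul_of_pos_left hz hC
    _ = ε := mul_div_cancel₀ ε hC.ne'

theorem EReal.biInf_coe_eq_top_iff {α : Type*} {s : Set α} {Φ : α → ℝ} :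
    ⨅ e ∈ s, (Φ e : EReal) = ⊤ ↔ s = ∅ := by
  simp [eq_empty_iff_forall_notMem]

theorem feasReach_mono (zh : ExtProcess P) : Monotone (FeasReach zh) := by
  rintro r r' h e ⟨⟨z, hz, hzr, rfl⟩, he⟩
  exact ⟨⟨z, hz, hzr.trans_le h, rfl⟩, he⟩

theorem hasLocalGap_of_isolated {zh : ExtProcess P} (h : Isolated zh) : HasLocalGap zh := by
  obtain ⟨r, hr, hempty⟩ := h
  refine ⟨r, hr, ?_⟩
  rw [EReal.biInf_coe_eq_top_iff.2 hempty]
  exact EReal.coe_lt_top _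

theorem isolated_of_hasLocalGap {zh : ExtProcess P} (h : HasLocalGap zh) : Isolated zh := by
  obtain ⟨r₀, hr₀, hgap⟩ := h
  obtain ⟨c, hΨc, hcI⟩ := EReal.lt_iff_exists_real_btwn.1 hgap
  have hΦ : Continuous fun e : ℝ × Euc n × ℝ => P.Ψ (e.1, e.2.1) :=
    P.hΨ.continuous.comp (by fun_prop)
  have hΨc' : P.Ψ ((endpt zh).1, (endpt zh).2.1) < c := EReal.coe_lt_coe_iff.1 hΨc
  obtain ⟨η, hη, hΦη⟩ := Metric.eventually_nhds_iff.1 <|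
    hΦ.continuousAt.eventually (eventually_lt_nhds hΨc')
  obtain ⟨δ, hδ, hδη⟩ := exists_dist_endpt_lt_of_dproc_lt zh hη
  refine ⟨min r₀ δ, lt_min hr₀ hδ, eq_empty_of_forall_notMem fun e he => ?_⟩
  have hle : ⨅ e ∈ FeasReach zh r₀, (P.Ψ (e.1, e.2.1) : EReal) ≤ P.Ψ (e.1, e.2.1) :=
    iInf₂_le e (feasReach_mono zh (min_le_left _ _) he)
  obtain ⟨⟨z, -, hz, rfl⟩, -⟩ := he
  have hlt : P.Ψ ((endpt z).1, (endpt z).2.1) < c :=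
    hΦη (hδη z (hz.trans_le (min_le_right _ _)))
  exact (hle.trans_lt ((EReal.coe_lt_coe_iff.2 hlt).trans hcI)).false

theorem stmt14_general (zh : ExtProcess P) :
    (HasLocalGap zh ↔ Isolated zh) ∧
    (Isolated zh ↔
      ∃ rh > (0 : ℝ), ∀ Φ : ℝ × Euc n → ℝ, Continuous Φ →
        ∀ r : ℝ, 0 < r → r ≤ rh →
          (⨅ e ∈ FeasReach zh r, ((Φ (e.1, e.2.1) : ℝ) : EReal)) = ⊤) := by
  refine ⟨⟨isolated_of_hasLocalGap, hasLocalGap_of_isolated⟩, ⟨?_, ?_⟩⟩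
  · rintro ⟨rh, hrh, hempty⟩
    exact ⟨rh, hrh, fun Φ _ r _ hr => EReal.biInf_coe_eq_top_iff.2 <|
      subset_empty_iff.1 (hempty ▸ feasReach_mono zh hr)⟩
  · rintro ⟨rh, hrh, h⟩
    exact ⟨rh, hrh,
      EReal.biInf_coe_eq_top_iff.1 (h (fun _ => 0) continuous_const rh hrh le_rfl)⟩

/-- Lemma 4.1: for a feasible extended process `ẑ`, the following are
equivalent: (i) there is a local infimum gap at `ẑ`; (ii) `ẑ` is isolated; (iii) there is
`r̂ > 0` such that `inf{Φ(y⁰,y) : (y⁰,y,β) ∈ R^r_{W₊}(ẑ) ∩ (𝔗×[0,K])} = +∞` for every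
continuous `Φ` and every `r ∈ (0, r̂]`. -/
theorem stmt14 (zh : ExtProcess P) (hfeas : Feasible zh) :
    (HasLocalGap zh ↔ Isolated zh) ∧
    (Isolated zh ↔
      ∃ rh > (0 : ℝ), ∀ Φ : ℝ × Euc n → ℝ, Continuous Φ →
        ∀ r : ℝ, 0 < r → r ≤ rh →
          (⨅ e ∈ FeasReach zh r, ((Φ (e.1, e.2.1) : ℝ) : EReal)) = ⊤) :=
  stmt14_general zh
end
end

section
/- Let η(s) := (1/2)sin(π(s − 1/2)) − 1/2. Suppose u ∈ L¹([0,1], [0,+∞)) and x = (x¹, x²) : [0,1] → ℝ² is absolutely continuous, with x(0) = (0,0), dx¹/dt = u(t) and dx²/dt = 1 + η(x²(t))u(t) for a.e. t ∈ [0,1], x²(1) = 1, and ∫₀¹ u(t)dt ≤ 1. Then u = 0 a.e. on [0,1] and x(t) = (0, t) for all t ∈ [0,1]; in particular the corresponding final cost is Ψ(x¹(1), x²(1)) = 1 for Ψ(x¹, x²) := (x¹ − 1)². -/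
/-!
Write `g = η(x²) u`. Since `-1 ≤ η ≤ 0` and `u ≥ 0`, we have `-u ≤ g ≤ 0`, so
`x²(t) = t + ∫₀ᵗ g` lies in `[t - ∫₀ᵗ u, t] ⊆ [t - 1, t]`. The final constraint
`x²(1) = 1` forces `∫₀¹ g = 0`, hence `g = 0` a.e. For `0 < t < 1` the state `x²(t)` lies
in `(-1, 1)`, where `η < 0`, so `u(t) = 0`; the trajectory is then read off the integral
equations.
-/

open MeasureTheory Set intervalIntegral

noncomputable section

/-- The function `η(s) = (1/2) sin(π(s − 1/2)) − 1/2` of the illustrative example. -/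
def ηfun (s : ℝ) : ℝ := (1 / 2) * Real.sin (Real.pi * (s - 1 / 2)) - 1 / 2

lemma ηfun_eq_cos (s : ℝ) : ηfun s = (Real.cos (Real.pi * (s - 1)) - 1) / 2 := by
  rw [ηfun, ← Real.cos_sub_pi_div_two]
  ring_nf

lemma ηfun_nonpos (s : ℝ) : ηfun s ≤ 0 := by
  rw [ηfun_eq_cos]
  linarith [Real.cos_le_one (Real.pi * (s - 1))]

lemma neg_one_le_ηfun (s : ℝ) : -1 ≤ ηfun s := by
  rw [ηfun_eq_cos]
  linarith [Real.neg_one_le_cos (Real.pi * (s - 1))]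

lemma ηfun_neg_of_mem_Ioo {s : ℝ} (hs : s ∈ Ioo (-1) 1) : ηfun s < 0 := by
  have hπ := Real.pi_pos
  have hlt : -(2 * Real.pi) < Real.pi * (s - 1) := by nlinarith [hs.1]
  have hne : Real.pi * (s - 1) ≠ 0 := mul_ne_zero hπ.ne' (by linarith [hs.2])
  have hcos : Real.cos (Real.pi * (s - 1)) ≠ 1 :=
    mt (Real.cos_eq_one_iff_of_lt_of_lt hlt (by nlinarith [hs.2])).1 hne
  rw [ηfun_eq_cos]
  linarith [lt_of_le_of_ne (Real.cos_le_one (Real.pi * (s - 1))) hcos]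

lemma continuous_ηfun : Continuous ηfun := by
  unfold ηfun
  fun_prop

section IntervalIntegral

variable {f g : ℝ → ℝ} {a b t : ℝ}

lemma intervalIntegral_mono_of_ae_le_on_Icc (hf : IntegrableOn f (Icc a b))
    (hg : IntegrableOn g (Icc a b)) (hfg : ∀ᵐ s ∂volume.restrict (Icc a b), f s ≤ g s)
    (ht : t ∈ Icc a b) : ∫ s in a..t, f s ≤ ∫ s in a..t, g s := by
  have hsub : Icc a t ⊆ Icc a b := Icc_subset_Icc_right ht.2
  exact integral_mono_ae_restrict ht.1
    ((intervalIntegrable_iff_integrableOn_Icc_of_le ht.1).2 (hf.mono_set hsub))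
    ((intervalIntegrable_iff_integrableOn_Icc_of_le ht.1).2 (hg.mono_set hsub))
    (ae_restrict_of_ae_restrict_of_subset hsub hfg)

lemma intervalIntegral_le_of_nonneg_on_Icc (hf : IntegrableOn f (Icc a b))
    (hnonneg : ∀ᵐ s ∂volume.restrict (Icc a b), 0 ≤ f s) (ht : t ∈ Icc a b) :
    ∫ s in a..t, f s ≤ ∫ s in a..b, f s :=
  integral_mono_interval le_rfl ht.1 ht.2
    (ae_restrict_of_ae_restrict_of_subset Ioc_subset_Icc_self hnonneg)
    ((intervalIntegrable_iff_integrableOn_Icc_of_le (ht.1.trans ht.2)).2 hf)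

lemma intervalIntegral_eq_zero_of_ae_eq_zero_on_Icc
    (hf : ∀ᵐ s ∂volume.restrict (Icc a b), f s = 0) (ht : t ∈ Icc a b) :
    ∫ s in a..t, f s = 0 := by
  have hsub : Ioc a t ⊆ Icc a b := Ioc_subset_Icc_self.trans (Icc_subset_Icc_right ht.2)
  rw [integral_of_le ht.1]
  exact integral_eq_zero_of_ae (ae_restrict_of_ae_restrict_of_subset hsub hf)

lemma ae_eq_zero_on_Icc_of_nonpos_of_intervalIntegral_eq_zero (hab : a ≤ b)
    (hf : IntegrableOn f (Icc a b)) (hnonpos : ∀ᵐ s ∂volume.restrict (Icc a b), f s ≤ 0)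
    (hzero : ∫ s in a..b, f s = 0) : ∀ᵐ s ∂volume.restrict (Icc a b), f s = 0 := by
  have hneg_nonneg : ∀ᵐ s ∂volume.restrict (Icc a b), 0 ≤ -f s := by
    filter_upwards [hnonpos] with s hs
    exact neg_nonneg.2 hs
  have hneg_zero : ∫ s in Icc a b, -f s = 0 := by
    rw [MeasureTheory.integral_neg, integral_Icc_eq_integral_Ioc, ← integral_of_le hab, hzero,
      neg_zero]
  filter_upwards [(setIntegral_eq_zero_iff_of_nonneg_ae hneg_nonneg hf.neg).1 hneg_zero] with s hs
  exact neg_eq_zero.1 hs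

end IntervalIntegral

lemma ae_eq_zero_of_feasible (u x2 : ℝ → ℝ)
    (hu_int : IntegrableOn u (Icc 0 1) volume)
    (hu_nonneg : ∀ᵐ t ∂(volume.restrict (Icc (0 : ℝ) 1)), 0 ≤ u t)
    (hx2cont : ContinuousOn x2 (Icc (0 : ℝ) 1))
    (hx2 : ∀ t ∈ Icc (0 : ℝ) 1, x2 t = t + ∫ s in (0 : ℝ)..t, ηfun (x2 s) * u s)
    (hfinal : x2 1 = 1)
    (henergy : (∫ t in (0 : ℝ)..1, u t) ≤ 1) :
    ∀ᵐ t ∂(volume.restrict (Icc (0 : ℝ) 1)), u t = 0 := by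
  set g : ℝ → ℝ := fun t => ηfun (x2 t) * u t
  have hg_int : IntegrableOn g (Icc 0 1) :=
    hu_int.continuousOn_mul (continuous_ηfun.comp_continuousOn hx2cont) isCompact_Icc
  have hg_nonpos : ∀ᵐ s ∂volume.restrict (Icc (0 : ℝ) 1), g s ≤ 0 := by
    filter_upwards [hu_nonneg] with s hs
    exact mul_nonpos_of_nonpos_of_nonneg (ηfun_nonpos _) hs
  have hg_ge : ∀ᵐ s ∂volume.restrict (Icc (0 : ℝ) 1), -u s ≤ g s := by
    filter_upwards [hu_nonneg] with s hs
    nlinarith [mul_nonneg (by linarith [neg_one_le_ηfun (x2 s)] : 0 ≤ ηfun (x2 s) + 1) hs]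
  have hx2_le : ∀ t ∈ Icc (0 : ℝ) 1, x2 t ≤ t := fun t ht => by
    have hint : ∫ s in (0 : ℝ)..t, g s ≤ ∫ s in (0 : ℝ)..t, 0 :=
      intervalIntegral_mono_of_ae_le_on_Icc hg_int integrableOn_zero hg_nonpos ht
    rw [intervalIntegral.integral_zero] at hint
    linarith [hx2 t ht]
  have hx2_ge : ∀ t ∈ Icc (0 : ℝ) 1, t - 1 ≤ x2 t := fun t ht => by
    have hint : ∫ s in (0 : ℝ)..t, -u s ≤ ∫ s in (0 : ℝ)..t, g s :=
      intervalIntegral_mono_of_ae_le_on_Icc hu_int.neg hg_int hg_ge ht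
    rw [intervalIntegral.integral_neg] at hint
    linarith [hx2 t ht, intervalIntegral_le_of_nonneg_on_Icc hu_int hu_nonneg ht]
  have hg_zero : ∀ᵐ s ∂volume.restrict (Icc (0 : ℝ) 1), g s = 0 := by
    refine ae_eq_zero_on_Icc_of_nonpos_of_intervalIntegral_eq_zero zero_le_one hg_int hg_nonpos ?_
    linarith [hx2 1 ⟨zero_le_one, le_rfl⟩]
  rw [← Measure.restrict_congr_set Ioo_ae_eq_Icc]
  filter_upwards [ae_restrict_of_ae_restrict_of_subset Ioo_subset_Icc_self hg_zero,
    ae_restrict_mem measurableSet_Ioo] with t hgt ht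
  have ht' := Ioo_subset_Icc_self ht
  have hη : ηfun (x2 t) < 0 :=
    ηfun_neg_of_mem_Ioo ⟨by linarith [hx2_ge t ht', ht.1], by linarith [hx2_le t ht', ht.2]⟩
  exact (mul_eq_zero.1 hgt).resolve_left hη.ne

/-- illustrative example, Section 4.4: for the system
`dx¹/dt = u`, `dx²/dt = 1 + η(x²) u` with control `u ∈ L¹([0,1], [0,∞))`, initial state
`(0,0)`, final constraint `x²(1) = 1` and energy bound `∫₀¹ u ≤ 1` (the trajectory is
encoded in integral form, which expresses absolute continuity together with the ODE and
the initial condition), the only feasible process is `u = 0` a.e. with trajectory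
`x(t) = (0, t)`; in particular `Ψ(x¹(1), x²(1)) = (x¹(1) − 1)² = 1`. -/
theorem stmt19 (u : ℝ → ℝ) (x1 x2 : ℝ → ℝ)
    (hu_int : IntegrableOn u (Set.Icc 0 1) volume)
    (hu_nonneg : ∀ᵐ t ∂(volume.restrict (Set.Icc (0 : ℝ) 1)), 0 ≤ u t)
    (hx1 : ∀ t ∈ Set.Icc (0 : ℝ) 1, x1 t = ∫ s in (0 : ℝ)..t, u s)
    (hx2cont : ContinuousOn x2 (Set.Icc (0 : ℝ) 1))
    (hx2 : ∀ t ∈ Set.Icc (0 : ℝ) 1, x2 t = t + ∫ s in (0 : ℝ)..t, ηfun (x2 s) * u s)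
    (hfinal : x2 1 = 1)
    (henergy : (∫ t in (0 : ℝ)..1, u t) ≤ 1) :
    (∀ᵐ t ∂(volume.restrict (Set.Icc (0 : ℝ) 1)), u t = 0) ∧
    (∀ t ∈ Set.Icc (0 : ℝ) 1, x1 t = 0 ∧ x2 t = t) ∧
    (x1 1 - 1) ^ 2 = 1 := by
  have hu0 := ae_eq_zero_of_feasible u x2 hu_int hu_nonneg hx2cont hx2 hfinal henergy
  have hgu0 : ∀ᵐ s ∂volume.restrict (Icc (0 : ℝ) 1), ηfun (x2 s) * u s = 0 := by
    filter_upwards [hu0] with s hs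
    rw [hs, mul_zero]
  have htraj : ∀ t ∈ Icc (0 : ℝ) 1, x1 t = 0 ∧ x2 t = t := fun t ht =>
    ⟨(hx1 t ht).trans (intervalIntegral_eq_zero_of_ae_eq_zero_on_Icc hu0 ht),
      by rw [hx2 t ht, intervalIntegral_eq_zero_of_ae_eq_zero_on_Icc hgu0 ht, add_zero]⟩
  refine ⟨hu0, htraj, ?_⟩
  rw [(htraj 1 ⟨zero_le_one, le_rfl⟩).1]
  norm_num
end
end
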